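/- arXiv:2405.12655 — 8 statements merged into one kernel-verified Lean document; each statement's English description precedes it below -/
import Mathlib

section
/- Let f : E → ℝ be Lipschitz with constant L ≥ 0 and let x ∈ E. Then the Goldstein subgradient norm ‖g_ε(x)‖ satisfies the following trichotomy: (a) for every ε with 0 ≤ ε < Γf(x) one has ‖g_ε(x)‖ > ε; (b) at ε = Γf(x) one has ‖g_{Γf(x)}(x)‖ ≤ Γf(x); (c) for every ε > Γf(x) one has ‖g_ε(x)‖ < ε. -/
open Filter Topology Metric Set
open scoped Classical

variable {E : Type*} [NormedAddCommGroup E] [InnerProductSpace ℝ E] [FiniteDimensional ℝ E]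

/-- The Clarke subdifferential: the closed convex hull of all limits of gradients
along sequences of points of differentiability converging to `x`. -/
noncomputable def clarkeSubdiff (f : E → ℝ) (x : E) : Set E :=
  closure (convexHull ℝ {v : E | ∃ u : ℕ → E,
    (∀ n, DifferentiableAt ℝ f (u n)) ∧
    Tendsto u atTop (𝓝 x) ∧
    Tendsto (fun n => gradient f (u n)) atTop (𝓝 v)})

/-- The Goldstein subdifferential of radius `ε`. -/
noncomputable def goldsteinSubdiff (f : E → ℝ) (x : E) (ε : ℝ) : Set E :=
  convexHull ℝ (⋃ y ∈ Metric.closedBall x ε, clarkeSubdiff f y)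

/-- The element of minimal norm of a set (junk value `0` if no minimizer exists). -/
noncomputable def minNorm (s : Set E) : E :=
  if h : ∃ v, v ∈ s ∧ ∀ w ∈ s, ‖v‖ ≤ ‖w‖ then h.choose else 0

/-- The Goldstein subgradient: the minimal-norm element of the Goldstein subdifferential. -/
noncomputable def goldsteinGrad (f : E → ℝ) (x : E) (ε : ℝ) : E :=
  minNorm (goldsteinSubdiff f x ε)

/-- The Goldstein modulus `Γf(x) = inf {ε ≥ 0 : ‖g_ε(x)‖ ≤ ε}`. -/
noncomputable def goldsteinModulus (f : E → ℝ) (x : E) : ℝ :=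
  sInf {ε : ℝ | 0 ≤ ε ∧ ‖goldsteinGrad f x ε‖ ≤ ε}

/-! Part (a) is the definition of the infimum, and (c) follows from it because `ε ↦ ‖g_ε(x)‖`
is antitone. For (b), `∂_ε f(x)` is the convex hull of the limiting gradients at points of
`closedBall x ε`, i.e. the projection of the part of the closed gradient graph lying over that
ball. Since gradients are bounded by the Lipschitz constant, these parts are compact, so they
depend upper semicontinuously on `ε` from the right, and hence so does `∂_ε f(x)`. Thus
`‖g_Γ(x)‖ ≤ ‖g_ε(x)‖ + δ ≤ ε + δ` for every `ε > Γ` close enough to `Γ`. -/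

open Module

section ConvexHull

variable {F : Type*} [NormedAddCommGroup F] [NormedSpace ℝ F] [FiniteDimensional ℝ F]

lemma exists_stdSimplex_sum_smul_eq_of_mem_convexHull {s : Set F} {x : F}
    (hx : x ∈ convexHull ℝ s) :
    ∃ w ∈ stdSimplex ℝ (Fin (finrank ℝ F + 1)), ∃ z : Fin (finrank ℝ F + 1) → F,
      (∀ i, z i ∈ s) ∧ ∑ i, w i • z i = x := by
  obtain ⟨z₀, hz₀⟩ := convexHull_nonempty_iff.mp ⟨x, hx⟩
  obtain ⟨ι, _, z, w, hzs, hz, hw, hw1, rfl⟩ := eq_pos_convex_span_of_mem_convexHull hx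
  have hcard : Fintype.card ι ≤ Fintype.card (Fin (finrank ℝ F + 1)) := by
    rw [Fintype.card_fin]
    exact hz.card_le_finrank_succ.trans (by gcongr; exact Submodule.finrank_le _)
  obtain ⟨e⟩ := Function.Embedding.nonempty_of_card_le hcard
  -- pad the Carathéodory representation with zero weights
  refine ⟨Function.extend e w 0, ⟨fun j => ?_, ?_⟩, Function.extend e z fun _ => z₀,
    fun j => ?_, ?_⟩
  · by_cases hj : ∃ i, e i = j
    · obtain ⟨i, rfl⟩ := hj
      exact e.injective.extend_apply w 0 i ▸ (hw i).le
    · exact (Function.extend_apply' (f := e) w 0 j hj).ge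
  · rw [← hw1]
    exact (Fintype.sum_of_injective e e.injective w _
      (fun j hj => Function.extend_apply' (f := e) w 0 j hj)
      fun i => (e.injective.extend_apply w 0 i).symm).symm
  · by_cases hj : ∃ i, e i = j
    · obtain ⟨i, rfl⟩ := hj
      exact e.injective.extend_apply z _ i ▸ hzs ⟨i, rfl⟩
    · exact (Function.extend_apply' _ _ _ hj).symm ▸ hz₀
  · refine (Fintype.sum_of_injective e e.injective _ _ (fun j hj => ?_) fun i => ?_).symm
    · simp [Function.extend_apply' _ _ _ hj]
    · simp [e.injective.extend_apply]

lemma convexHull_eq_image_stdSimplex (s : Set F) :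
    convexHull ℝ s = (fun p : (Fin (finrank ℝ F + 1) → ℝ) × (Fin (finrank ℝ F + 1) → F) =>
      ∑ i, p.1 i • p.2 i) '' (stdSimplex ℝ _ ×ˢ univ.pi fun _ => s) := by
  refine Subset.antisymm (fun x hx => ?_) ?_
  · obtain ⟨w, hw, z, hz, rfl⟩ := exists_stdSimplex_sum_smul_eq_of_mem_convexHull hx
    exact ⟨(w, z), ⟨hw, fun i _ => hz i⟩, rfl⟩
  · rintro _ ⟨⟨w, z⟩, ⟨⟨hw0, hw1⟩, hz⟩, rfl⟩
    exact (convex_convexHull ℝ s).sum_mem (fun i _ => hw0 i) hw1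
      fun i _ => subset_convexHull ℝ s (hz i (mem_univ i))

protected lemma IsCompact.convexHull {s : Set F} (hs : IsCompact s) :
    IsCompact (convexHull ℝ s) := by
  rw [convexHull_eq_image_stdSimplex]
  exact ((isCompact_stdSimplex _ _).prod (isCompact_univ_pi fun _ => hs)).image (by fun_prop)

end ConvexHull

section MinNorm

variable {V : Type*} [NormedAddCommGroup V]

lemma minNorm_spec {s : Set V} (hs : IsCompact s) (hne : s.Nonempty) :
    minNorm s ∈ s ∧ ∀ w ∈ s, ‖minNorm s‖ ≤ ‖w‖ := by
  obtain ⟨v, hv, hmin⟩ := hs.exists_isMinOn hne continuous_norm.continuousOn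
  have h : ∃ v, v ∈ s ∧ ∀ w ∈ s, ‖v‖ ≤ ‖w‖ := ⟨v, hv, fun w hw => hmin hw⟩
  rw [minNorm, dif_pos h]
  exact h.choose_spec

lemma norm_minNorm_lt_of_subset_thickening {s t : Set V} {δ : ℝ} (hs : IsCompact s)
    (hne : s.Nonempty) (ht : IsCompact t) (hst : s ⊆ thickening δ t) :
    ‖minNorm t‖ < ‖minNorm s‖ + δ := by
  obtain ⟨z, hz, hdist⟩ := mem_thickening_iff.mp (hst (minNorm_spec hs hne).1)
  calc ‖minNorm t‖ ≤ ‖z‖ := (minNorm_spec ht ⟨z, hz⟩).2 z hz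
    _ < ‖minNorm s‖ + δ := norm_lt_of_mem_ball (mem_ball'.mpr hdist)

end MinNorm

def gradientGraph (f : E → ℝ) : Set (E × E) :=
  (fun z => (z, gradient f z)) '' {z | DifferentiableAt ℝ f z}

lemma mem_closure_gradientGraph_iff {f : E → ℝ} {y v : E} :
    (y, v) ∈ closure (gradientGraph f) ↔ ∃ u : ℕ → E, (∀ n, DifferentiableAt ℝ f (u n)) ∧
      Tendsto u atTop (𝓝 y) ∧ Tendsto (fun n => gradient f (u n)) atTop (𝓝 v) := by
  rw [mem_closure_iff_seq_limit]
  constructor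
  · rintro ⟨p, hp, hlim⟩
    choose u hu hpu using hp
    obtain rfl : p = fun n => (u n, gradient f (u n)) := funext fun n => (hpu n).symm
    exact ⟨u, hu, hlim.fst_nhds, hlim.snd_nhds⟩
  · rintro ⟨u, hu, hy, hv⟩
    exact ⟨fun n => (u n, gradient f (u n)), fun n => mem_image_of_mem _ (hu n),
      hy.prodMk_nhds hv⟩

lemma clarkeSubdiff_eq (f : E → ℝ) (y : E) :
    clarkeSubdiff f y = closure (convexHull ℝ {v | (y, v) ∈ closure (gradientGraph f)}) := by
  simp only [clarkeSubdiff, mem_closure_gradientGraph_iff]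

/-- `⋃ y ∈ closedBall x ε, D f(y)`, where `D f(y)` is the set of limits of gradients along
sequences tending to `y` whose closed convex hull is `∂f(y)`. -/
def limitingGradients (f : E → ℝ) (x : E) (ε : ℝ) : Set E :=
  Prod.snd '' (closure (gradientGraph f) ∩ closedBall x ε ×ˢ univ)

lemma goldsteinSubdiff_mono (f : E → ℝ) (x : E) {ε δ : ℝ} (h : ε ≤ δ) :
    goldsteinSubdiff f x ε ⊆ goldsteinSubdiff f x δ :=
  convexHull_mono (biUnion_subset_biUnion_left (closedBall_subset_closedBall h))

section Lipschitz

variable {f : E → ℝ} {K : NNReal}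

lemma norm_gradient_le_of_lipschitzWith (hf : LipschitzWith K f) (z : E) :
    ‖gradient f z‖ ≤ K := by
  rw [gradient, LinearIsometryEquiv.norm_map]
  exact norm_fderiv_le_of_lipschitz ℝ hf

lemma dense_differentiableAt_of_lipschitzWith (hf : LipschitzWith K f) :
    Dense {z | DifferentiableAt ℝ f z} := by
  borelize E
  exact MeasureTheory.Measure.dense_of_ae
    (hf.ae_differentiableAt (μ := MeasureTheory.Measure.addHaar))

lemma closure_gradientGraph_subset (hf : LipschitzWith K f) :
    closure (gradientGraph f) ⊆ univ ×ˢ closedBall 0 K :=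
  closure_minimal (by rintro _ ⟨z, -, rfl⟩; simpa using norm_gradient_le_of_lipschitzWith hf z)
    (isClosed_univ.prod isClosed_closedBall)

lemma exists_mem_closure_gradientGraph (hf : LipschitzWith K f) (y : E) :
    ∃ v, (y, v) ∈ closure (gradientGraph f) := by
  obtain ⟨u, hu, hy⟩ :=
    mem_closure_iff_seq_limit.mp (dense_differentiableAt_of_lipschitzWith hf y)
  obtain ⟨v, -, φ, hφ, hv⟩ :=
    tendsto_subseq_of_bounded (isBounded_closedBall (x := (0 : E)) (r := K))
      (x := fun n => gradient f (u n))
      fun n => by simpa using norm_gradient_le_of_lipschitzWith hf (u n)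
  exact ⟨v, mem_closure_gradientGraph_iff.mpr ⟨u ∘ φ, fun n => hu _, hy.comp hφ.tendsto_atTop, hv⟩⟩

lemma isCompact_closure_gradientGraph_inter (hf : LipschitzWith K f) (x : E) (ε : ℝ) :
    IsCompact (closure (gradientGraph f) ∩ closedBall x ε ×ˢ univ) := by
  refine ((isCompact_closedBall x ε).prod (isCompact_closedBall (0 : E) K)).of_isClosed_subset
    (isClosed_closure.inter (isClosed_closedBall.prod isClosed_univ)) ?_
  rintro p ⟨hp, hp₁, -⟩
  exact ⟨hp₁, (closure_gradientGraph_subset hf hp).2⟩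

lemma isCompact_limitingGradients (hf : LipschitzWith K f) (x : E) (ε : ℝ) :
    IsCompact (limitingGradients f x ε) :=
  (isCompact_closure_gradientGraph_inter hf x ε).image continuous_snd

lemma limitingGradients_nonempty (hf : LipschitzWith K f) (x : E) {ε : ℝ} (hε : 0 ≤ ε) :
    (limitingGradients f x ε).Nonempty :=
  let ⟨v, hv⟩ := exists_mem_closure_gradientGraph hf x
  ⟨v, (x, v), ⟨hv, mem_closedBall_self hε, trivial⟩, rfl⟩

lemma limitingGradients_subset_closedBall (hf : LipschitzWith K f) (x : E) (ε : ℝ) :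
    limitingGradients f x ε ⊆ closedBall 0 K := by
  rintro _ ⟨p, ⟨hp, -⟩, rfl⟩
  exact (closure_gradientGraph_subset hf hp).2

lemma exists_limitingGradients_subset_thickening (hf : LipschitzWith K f) (x : E) (ε₀ : ℝ)
    {δ : ℝ} (hδ : 0 < δ) :
    ∃ ε > ε₀, limitingGradients f x ε ⊆ thickening δ (limitingGradients f x ε₀) := by
  let V : Ioi ε₀ → Set (E × E) := fun ε => closure (gradientGraph f) ∩ closedBall x ε ×ˢ univ
  have hV : Monotone V := fun ε ε' h =>
    inter_subset_inter_right _ (prod_mono (closedBall_subset_closedBall h) subset_rfl)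
  have : Nonempty (Ioi ε₀) := (nonempty_Ioi (a := ε₀)).to_subtype
  obtain ⟨⟨ε, hε⟩, hsub⟩ := exists_subset_nhds_of_isCompact' hV.directed_ge
    (fun ε => isCompact_closure_gradientGraph_inter hf x ε)
    (fun ε => (isCompact_closure_gradientGraph_inter hf x ε).isClosed)
    (U := Prod.snd ⁻¹' thickening δ (limitingGradients f x ε₀)) fun p hp => by
      simp only [V, mem_iInter, mem_inter_iff, mem_prod, mem_closedBall] at hp
      refine (isOpen_thickening.preimage continuous_snd).mem_nhds (self_subset_thickening hδ _ ?_)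
      refine ⟨p, ⟨(hp ⟨ε₀ + 1, by simp⟩).1, ?_, trivial⟩, rfl⟩
      exact le_of_forall_gt_imp_ge_of_dense fun ε hε => (hp ⟨ε, hε⟩).2.1
  exact ⟨ε, hε, image_subset_iff.mpr hsub⟩

lemma goldsteinSubdiff_eq_convexHull (hf : LipschitzWith K f) (x : E) (ε : ℝ) :
    goldsteinSubdiff f x ε = convexHull ℝ (limitingGradients f x ε) := by
  refine Subset.antisymm (convexHull_min (iUnion₂_subset fun y hy => ?_) (convex_convexHull ℝ _))
    (convexHull_mono ?_)
  · rw [clarkeSubdiff_eq, ← (isCompact_limitingGradients hf x ε).convexHull.isClosed.closure_eq]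
    exact closure_mono (convexHull_mono fun v hv => ⟨(y, v), ⟨hv, hy, trivial⟩, rfl⟩)
  · rintro _ ⟨⟨y, v⟩, ⟨hv, hy, -⟩, rfl⟩
    refine mem_biUnion hy ?_
    rw [clarkeSubdiff_eq]
    exact subset_closure (subset_convexHull ℝ _ hv)

lemma isCompact_goldsteinSubdiff (hf : LipschitzWith K f) (x : E) (ε : ℝ) :
    IsCompact (goldsteinSubdiff f x ε) := by
  rw [goldsteinSubdiff_eq_convexHull hf]
  exact (isCompact_limitingGradients hf x ε).convexHull

lemma goldsteinSubdiff_nonempty (hf : LipschitzWith K f) (x : E) {ε : ℝ} (hε : 0 ≤ ε) :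
    (goldsteinSubdiff f x ε).Nonempty := by
  rw [goldsteinSubdiff_eq_convexHull hf, convexHull_nonempty_iff]
  exact limitingGradients_nonempty hf x hε

lemma goldsteinSubdiff_subset_closedBall (hf : LipschitzWith K f) (x : E) (ε : ℝ) :
    goldsteinSubdiff f x ε ⊆ closedBall 0 K := by
  rw [goldsteinSubdiff_eq_convexHull hf]
  exact convexHull_min (limitingGradients_subset_closedBall hf x ε) (convex_closedBall _ _)

lemma exists_goldsteinSubdiff_subset_thickening (hf : LipschitzWith K f) (x : E) (ε₀ : ℝ)
    {δ : ℝ} (hδ : 0 < δ) :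
    ∃ ε > ε₀, goldsteinSubdiff f x ε ⊆ thickening δ (goldsteinSubdiff f x ε₀) := by
  obtain ⟨ε, hε, hsub⟩ := exists_limitingGradients_subset_thickening hf x ε₀ hδ
  refine ⟨ε, hε, ?_⟩
  rw [goldsteinSubdiff_eq_convexHull hf, goldsteinSubdiff_eq_convexHull hf]
  exact convexHull_min (hsub.trans (thickening_subset_of_subset δ (subset_convexHull ℝ _)))
    ((convex_convexHull ℝ _).thickening δ)

lemma goldsteinGrad_spec (hf : LipschitzWith K f) (x : E) {ε : ℝ} (hε : 0 ≤ ε) :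
    goldsteinGrad f x ε ∈ goldsteinSubdiff f x ε ∧
      ∀ w ∈ goldsteinSubdiff f x ε, ‖goldsteinGrad f x ε‖ ≤ ‖w‖ :=
  minNorm_spec (isCompact_goldsteinSubdiff hf x ε) (goldsteinSubdiff_nonempty hf x hε)

lemma norm_goldsteinGrad_le_of_lipschitzWith (hf : LipschitzWith K f) (x : E) {ε : ℝ} (hε : 0 ≤ ε) :
    ‖goldsteinGrad f x ε‖ ≤ K := by
  simpa using goldsteinSubdiff_subset_closedBall hf x ε (goldsteinGrad_spec hf x hε).1

lemma norm_goldsteinGrad_antitone (hf : LipschitzWith K f) (x : E) {ε δ : ℝ} (hε : 0 ≤ ε)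
    (h : ε ≤ δ) : ‖goldsteinGrad f x δ‖ ≤ ‖goldsteinGrad f x ε‖ :=
  (goldsteinGrad_spec hf x (hε.trans h)).2 _
    (goldsteinSubdiff_mono f x h (goldsteinGrad_spec hf x hε).1)

lemma norm_goldsteinGrad_le_of_forall_gt (hf : LipschitzWith K f) (x : E) {ε₀ : ℝ}
    (hε₀ : 0 ≤ ε₀) (h : ∀ ε > ε₀, ‖goldsteinGrad f x ε‖ ≤ ε) :
    ‖goldsteinGrad f x ε₀‖ ≤ ε₀ := by
  refine le_of_forall_pos_lt_add fun η hη => ?_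
  obtain ⟨ε₁, hε₁, hsub⟩ := exists_goldsteinSubdiff_subset_thickening hf x ε₀ (half_pos hη)
  set ε := min ε₁ (ε₀ + η / 2)
  have hε : ε₀ < ε := lt_min hε₁ (by linarith)
  have hclose : ‖goldsteinGrad f x ε₀‖ < ‖goldsteinGrad f x ε‖ + η / 2 :=
    norm_minNorm_lt_of_subset_thickening (isCompact_goldsteinSubdiff hf x ε)
      (goldsteinSubdiff_nonempty hf x (hε₀.trans hε.le)) (isCompact_goldsteinSubdiff hf x ε₀)
      ((goldsteinSubdiff_mono f x (min_le_left _ _)).trans hsub)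
  linarith [h ε hε, min_le_right ε₁ (ε₀ + η / 2)]

end Lipschitz

theorem stmt2_general (f : E → ℝ) (L : ℝ) (hf : LipschitzWith L.toNNReal f) (x : E) :
    (∀ ε : ℝ, 0 ≤ ε → ε < goldsteinModulus f x → ε < ‖goldsteinGrad f x ε‖) ∧
    ‖goldsteinGrad f x (goldsteinModulus f x)‖ ≤ goldsteinModulus f x ∧
    (∀ ε : ℝ, goldsteinModulus f x < ε → ‖goldsteinGrad f x ε‖ < ε) := by
  set S := {ε : ℝ | 0 ≤ ε ∧ ‖goldsteinGrad f x ε‖ ≤ ε}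
  have hS : BddBelow S := ⟨0, fun ε hε => hε.1⟩
  have hSne : S.Nonempty := ⟨L.toNNReal, NNReal.coe_nonneg _,
    norm_goldsteinGrad_le_of_lipschitzWith hf x (NNReal.coe_nonneg _)⟩
  have hΓ : 0 ≤ goldsteinModulus f x := le_csInf hSne fun ε hε => hε.1
  have above : ∀ ε, goldsteinModulus f x < ε → ‖goldsteinGrad f x ε‖ < ε := fun ε hε =>
    let ⟨δ, ⟨hδ, hgδ⟩, hδε⟩ := exists_lt_of_csInf_lt hSne hε
    ((norm_goldsteinGrad_antitone hf x hδ hδε.le).trans hgδ).trans_lt hδε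
  exact ⟨fun ε hε hlt => lt_of_not_ge fun hle => hlt.not_ge (csInf_le hS ⟨hε, hle⟩),
    norm_goldsteinGrad_le_of_forall_gt hf x hΓ fun ε hε => (above ε hε).le, above⟩

theorem stmt2 (f : E → ℝ) (L : ℝ) (hL : 0 ≤ L) (hf : LipschitzWith L.toNNReal f) (x : E) :
    (∀ ε : ℝ, 0 ≤ ε → ε < goldsteinModulus f x → ε < ‖goldsteinGrad f x ε‖) ∧
    ‖goldsteinGrad f x (goldsteinModulus f x)‖ ≤ goldsteinModulus f x ∧
    (∀ ε : ℝ, goldsteinModulus f x < ε → ‖goldsteinGrad f x ε‖ < ε) :=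
  stmt2_general f L hf x
end

section
/- Let f : E → ℝ be Lipschitz with constant L ≥ 0, let x ∈ E, and let ε be any radius with 0 < ε < Γf(x). Then the Goldstein subgradient g := g_ε(x) is nonzero, and the Goldstein update x⁺ := x − (ε/‖g‖)·g decreases the objective by more than ε², i.e. f(x⁺) < f(x) − ε². -/
open Filter Topology Metric Set
open scoped Classical

variable {E : Type*} [NormedAddCommGroup E] [InnerProductSpace ℝ E] [FiniteDimensional ℝ E]

/-!
Since `ε < Γf(x)`, the Goldstein subgradient `g` has `‖g‖ > ε`. As `g` is the minimal-norm point
of a convex set containing `∇f(z)` for every `z` in the closed ball of radius `ε` around `x`, we get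
`⟪∇f(z), g⟫ ≥ ‖g‖²` there: the slope of `f` in the direction `-g / ‖g‖` is at most `-‖g‖` wherever
`f` is differentiable in the ball. By Rademacher's theorem and Fubini, segments parallel to
`[x, x⁺]` and arbitrarily close to it meet points of non-differentiability only in a null set;
integrating along them and passing to the limit gives `f(x⁺) ≤ f(x) - ε‖g‖ < f(x) - ε²`.
-/

open MeasureTheory
open scoped NNReal RealInnerProductSpace

theorem LipschitzWith.sub_le_mul_of_ae_deriv_le {φ : ℝ → ℝ} {K : ℝ≥0} (hφ : LipschitzWith K φ)
    {a b c : ℝ} (hab : a ≤ b) (hderiv : ∀ᵐ t, t ∈ Ioo a b → deriv φ t ≤ c) :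
    φ b - φ a ≤ c * (b - a) := by
  have hac := hφ.lipschitzOnWith (s := uIcc a b) |>.absolutelyContinuousOnInterval
  rw [← hac.integral_deriv_eq_sub]
  calc ∫ t in a..b, deriv φ t ≤ ∫ _ in a..b, c := by
        refine intervalIntegral.integral_mono_ae_restrict hab hac.intervalIntegrable_deriv
          intervalIntegrable_const ?_
        rw [Measure.restrict_congr_set Ioo_ae_eq_Icc.symm, EventuallyLE,
          ae_restrict_iff' measurableSet_Ioo]
        exact hderiv
    _ = c * (b - a) := by simp [mul_comm]

theorem ae_ae_add_smul_of_ae {F : Type*} [NormedAddCommGroup F] [NormedSpace ℝ F]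
    [MeasurableSpace F] [BorelSpace F] [SecondCountableTopology F]
    {μ : Measure F} [μ.IsAddRightInvariant] [SFinite μ] {p : F → Prop}
    (hp_meas : MeasurableSet {z | p z}) (hp : ∀ᵐ z ∂μ, p z) (v : F) :
    ∀ᵐ y ∂μ, ∀ᵐ t : ℝ, p (y + t • v) := by
  rw [Measure.ae_ae_comm (μ := μ) (ν := volume) (p := fun y t => p (y + t • v))
    (hp_meas.preimage (f := fun q : F × ℝ => q.1 + q.2 • v) (by fun_prop))]
  exact ae_of_all _ fun t => (measurePreserving_add_right μ (t • v)).quasiMeasurePreserving.ae hp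

theorem LipschitzWith.sub_le_of_fderiv_le_on_segment {F : Type*} [NormedAddCommGroup F]
    [NormedSpace ℝ F] {f : F → ℝ} {K : ℝ≥0} (hf : LipschitzWith K f) {y v : F} {s c : ℝ}
    (hs : 0 ≤ s) (hdiff : ∀ᵐ t : ℝ, DifferentiableAt ℝ f (y + t • v))
    (hderiv : ∀ t ∈ Ioo 0 s, DifferentiableAt ℝ f (y + t • v) → fderiv ℝ f (y + t • v) v ≤ c) :
    f (y + s • v) - f y ≤ c * s := by
  obtain ⟨C, hline⟩ : ∃ C, LipschitzWith C fun t : ℝ => f (y + t • v) :=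
    ⟨_, hf.comp ((LipschitzWith.const y).add (ContinuousLinearMap.toSpanSingleton ℝ v).lipschitz)⟩
  simpa using hline.sub_le_mul_of_ae_deriv_le hs <| by
    filter_upwards [hdiff] with t ht htmem
    have hline_deriv : HasDerivAt (fun t : ℝ => f (y + t • v)) (fderiv ℝ f (y + t • v) v) t := by
      have hcomp :=
        ht.hasFDerivAt.comp_hasDerivAt t (((hasDerivAt_id' t).smul_const v).const_add y)
      rw [one_smul] at hcomp
      exact hcomp
    exact hline_deriv.deriv ▸ hderiv t htmem ht

theorem LipschitzWith.sub_le_of_fderiv_le {F : Type*} [NormedAddCommGroup F] [NormedSpace ℝ F]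
    [FiniteDimensional ℝ F] {f : F → ℝ} {K : ℝ≥0} (hf : LipschitzWith K f) {x v : F}
    (hv : v ≠ 0) {c : ℝ}
    (hderiv : ∀ z ∈ closedBall x ‖v‖, DifferentiableAt ℝ f z → fderiv ℝ f z v ≤ c) :
    f (x + v) - f x ≤ c := by
  borelize F
  have hlip : ∀ a b, f a - f b ≤ K * ‖a - b‖ := fun a b =>
    (Real.le_norm_self _).trans (hf.norm_sub_le a b)
  have hperturbed : ∀ δ ∈ Ioo (0 : ℝ) 1, f (x + v) - f x ≤ c + δ * (3 * K * ‖v‖ - c) := by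
    rintro δ ⟨hδ0, hδ1⟩
    have hr : 0 < δ * ‖v‖ := mul_pos hδ0 (norm_pos_iff.2 hv)
    obtain ⟨y, hy, hdiff⟩ : ∃ y ∈ closedBall x (δ * ‖v‖),
        ∀ᵐ t : ℝ, DifferentiableAt ℝ f (y + t • v) := by
      have hae := ae_ae_add_smul_of_ae (μ := Measure.addHaar)
        (measurableSet_of_differentiableAt ℝ f) hf.ae_differentiableAt v
      have := ae_restrict_neBot.2 (measure_closedBall_pos Measure.addHaar x hr).ne'
      exact ((ae_restrict_mem measurableSet_closedBall).and (ae_restrict_of_ae hae)).exists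
    rw [mem_closedBall, dist_eq_norm] at hy
    have hsegment : f (y + (1 - δ) • v) - f y ≤ c * (1 - δ) := by
      refine hf.sub_le_of_fderiv_le_on_segment (by linarith) hdiff fun t ht hd => hderiv _ ?_ hd
      rw [mem_closedBall, dist_eq_norm]
      calc ‖y + t • v - x‖ = ‖(y - x) + t • v‖ := by rw [add_sub_right_comm]
        _ ≤ δ * ‖v‖ + t * ‖v‖ := by
          grw [norm_add_le, norm_smul, Real.norm_of_nonneg ht.1.le, hy]
        _ ≤ ‖v‖ := by nlinarith [ht.2, norm_nonneg v]
    have hend : f (x + v) - f (y + (1 - δ) • v) ≤ K * (2 * (δ * ‖v‖)) := by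
      have hdist : ‖(x + v) - (y + (1 - δ) • v)‖ ≤ 2 * (δ * ‖v‖) := by
        calc ‖(x + v) - (y + (1 - δ) • v)‖ = ‖-(y - x) + δ • v‖ := by congr 1; module
          _ ≤ δ * ‖v‖ + δ * ‖v‖ := by
            grw [norm_add_le, norm_neg, norm_smul, Real.norm_of_nonneg hδ0.le, hy]
          _ = 2 * (δ * ‖v‖) := by ring
      grw [hlip, hdist]
    have hstart : f y - f x ≤ K * (δ * ‖v‖) := by grw [hlip, hy]
    linarith
  have hlim : Tendsto (fun δ : ℝ => c + δ * (3 * K * ‖v‖ - c)) (𝓝[>] 0) (𝓝 c) := by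
    have hcont : Continuous fun δ : ℝ => c + δ * (3 * K * ‖v‖ - c) := by fun_prop
    exact tendsto_nhdsWithin_of_tendsto_nhds (hcont.tendsto' 0 c (by simp))
  exact ge_of_tendsto hlim <| eventually_of_mem (Ioo_mem_nhdsGT one_pos) hperturbed

theorem norm_sq_le_inner_of_forall_norm_le {F : Type*} [NormedAddCommGroup F]
    [InnerProductSpace ℝ F] {s : Set F} (hs : Convex ℝ s) {g w : F} (hg : g ∈ s)
    (hmin : ∀ w ∈ s, ‖g‖ ≤ ‖w‖) (hw : w ∈ s) : ‖g‖ ^ 2 ≤ ⟪w, g⟫ := by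
  have : Nonempty s := ⟨⟨g, hg⟩⟩
  have hinf : ‖(0 : F) - g‖ = ⨅ w : s, ‖(0 : F) - w‖ := by
    simp only [zero_sub, norm_neg]
    exact le_antisymm (le_ciInf fun w => hmin w w.2)
      (ciInf_le (f := fun w : s => ‖(w : F)‖) ⟨0, by rintro _ ⟨w, rfl⟩; positivity⟩ ⟨g, hg⟩)
  have := (norm_eq_iInf_iff_real_inner_le_zero hs hg).1 hinf w hw
  rw [zero_sub, inner_neg_left, inner_sub_right, real_inner_self_eq_norm_sq, real_inner_comm] at this
  linarith

theorem minNorm_mem_and_norm_le_of_ne_zero {F : Type*} [NormedAddCommGroup F] {s : Set F}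
    (h : minNorm s ≠ 0) :
    minNorm s ∈ s ∧ ∀ w ∈ s, ‖minNorm s‖ ≤ ‖w‖ := by
  unfold minNorm at h ⊢
  split_ifs at h ⊢ with hex
  · exact hex.choose_spec
  · exact absurd rfl h

theorem gradient_mem_goldsteinSubdiff {f : E → ℝ} {x z : E} {ε : ℝ} (hz : z ∈ closedBall x ε)
    (hd : DifferentiableAt ℝ f z) : gradient f z ∈ goldsteinSubdiff f x ε := by
  have hclarke : gradient f z ∈ clarkeSubdiff f z :=
    subset_closure <| subset_convexHull ℝ _
      ⟨fun _ => z, fun _ => hd, tendsto_const_nhds, tendsto_const_nhds⟩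
  exact subset_convexHull ℝ _ (mem_biUnion hz hclarke)

theorem norm_sq_le_inner_gradient_goldsteinGrad {f : E → ℝ} {x z : E} {ε : ℝ}
    (hg : goldsteinGrad f x ε ≠ 0) (hz : z ∈ closedBall x ε) (hd : DifferentiableAt ℝ f z) :
    ‖goldsteinGrad f x ε‖ ^ 2 ≤ ⟪gradient f z, goldsteinGrad f x ε⟫ :=
  have hmin := minNorm_mem_and_norm_le_of_ne_zero hg
  norm_sq_le_inner_of_forall_norm_le (convex_convexHull ℝ _) hmin.1 hmin.2
    (gradient_mem_goldsteinSubdiff hz hd)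

theorem lt_norm_goldsteinGrad_of_lt_goldsteinModulus {f : E → ℝ} {x : E} {ε : ℝ} (hε : 0 ≤ ε)
    (hεΓ : ε < goldsteinModulus f x) : ε < ‖goldsteinGrad f x ε‖ := by
  by_contra! h
  exact hεΓ.not_ge <| csInf_le ⟨0, fun _ h => h.1⟩ ⟨hε, h⟩

theorem stmt5_general (f : E → ℝ) (L : ℝ) (hf : LipschitzWith L.toNNReal f)
    (x : E) (ε : ℝ) (hε : 0 < ε) (hεΓ : ε < goldsteinModulus f x) :
    goldsteinGrad f x ε ≠ 0 ∧
    f (x - (ε / ‖goldsteinGrad f x ε‖) • goldsteinGrad f x ε) < f x - ε ^ 2 := by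
  set g := goldsteinGrad f x ε
  have hεg : ε < ‖g‖ := lt_norm_goldsteinGrad_of_lt_goldsteinModulus hε.le hεΓ
  have hgpos : 0 < ‖g‖ := hε.trans hεg
  have hg : g ≠ 0 := norm_pos_iff.1 hgpos
  refine ⟨hg, ?_⟩
  have hstep : ‖(ε / ‖g‖) • g‖ = ε := by
    rw [norm_smul, Real.norm_of_nonneg (by positivity), div_mul_cancel₀ _ hgpos.ne']
  have hdescent : f (x + -((ε / ‖g‖) • g)) - f x ≤ -(ε * ‖g‖) := by
    refine hf.sub_le_of_fderiv_le (by simpa [hg] using hε.ne') fun z hz hd => ?_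
    rw [norm_neg, hstep] at hz
    have := norm_sq_le_inner_gradient_goldsteinGrad hg hz hd
    rw [← inner_gradient_left, inner_neg_right, real_inner_smul_right]
    calc -(ε / ‖g‖ * ⟪gradient f z, g⟫) ≤ -(ε / ‖g‖ * ‖g‖ ^ 2) := by gcongr
      _ = -(ε * ‖g‖) := by field_simp
  rw [← sub_eq_add_neg] at hdescent
  have hgap : ε ^ 2 < ε * ‖g‖ := by rw [sq]; exact mul_lt_mul_of_pos_left hεg hε
  linarith

theorem stmt5 (f : E → ℝ) (L : ℝ) (hL : 0 ≤ L) (hf : LipschitzWith L.toNNReal f)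
    (x : E) (ε : ℝ) (hε : 0 < ε) (hεΓ : ε < goldsteinModulus f x) :
    goldsteinGrad f x ε ≠ 0 ∧
    f (x - (ε / ‖goldsteinGrad f x ε‖) • goldsteinGrad f x ε) < f x - ε ^ 2 :=
  stmt5_general f L hf x ε hε hεΓ
end

section
/- Let α > 0 and define f₁ : E → ℝ by f₁(x) = (1/2)·α·‖x‖². Then for every x ∈ E the Goldstein modulus satisfies Γf₁(x) = (α/(1+α))·‖x‖; in particular Γf₁ grows linearly at the unique minimizer 0. -/
/-!
For `f = ½ α ‖·‖²` the gradient `y ↦ α • y` is continuous, so the Clarke subdifferential at `y`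
is `{α • y}` and the Goldstein subdifferential of radius `ε` is the ball `closedBall (α • x) (α ε)`.
The point of that ball closest to the origin has norm `max (α ‖x‖ - α ε) 0`, which is `≤ ε`
exactly when `ε ≥ α ‖x‖ / (1 + α)`.
-/

open Filter Topology Metric Set
open scoped Classical

variable {E : Type*} [NormedAddCommGroup E] [InnerProductSpace ℝ E] [FiniteDimensional ℝ E]

section

variable {F : Type*} [NormedAddCommGroup F]

theorem norm_minNorm_of_isMinOn {s : Set F} {v : F} (hv : v ∈ s) (hmin : IsMinOn (‖·‖) s v) :
    ‖minNorm s‖ = ‖v‖ := by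
  have hex : ∃ u, u ∈ s ∧ ∀ w ∈ s, ‖u‖ ≤ ‖w‖ := ⟨v, hv, hmin⟩
  rw [minNorm, dif_pos hex]
  exact le_antisymm (hex.choose_spec.2 v hv) (hmin hex.choose_spec.1)

theorem norm_minNorm_closedBall [NormedSpace ℝ F] (c : F) {r : ℝ} (hr : 0 ≤ r) :
    ‖minNorm (closedBall c r)‖ = max (‖c‖ - r) 0 := by
  have hlow : ∀ w ∈ closedBall c r, max (‖c‖ - r) 0 ≤ ‖w‖ := fun w hw =>
    max_le (by linarith [norm_sub_norm_le c w, norm_sub_rev c w, mem_closedBall_iff_norm.1 hw])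
      (norm_nonneg w)
  obtain ⟨v, hv, hvn⟩ : ∃ v ∈ closedBall c r, ‖v‖ = max (‖c‖ - r) 0 := by
    rcases le_or_gt ‖c‖ r with hcr | hcr
    · exact ⟨0, mem_closedBall_iff_norm.2 (by simpa using hcr), by simp [hcr]⟩
    · have hc : 0 < ‖c‖ := hr.trans_lt hcr
      -- the point of the segment `[0, c]` at distance `r` from `c`
      refine ⟨(1 - r / ‖c‖) • c, ?_, ?_⟩
      · rw [mem_closedBall_iff_norm, sub_smul, one_smul, sub_sub_cancel_left, norm_neg,
          norm_smul, Real.norm_of_nonneg (by positivity), div_mul_cancel₀ _ hc.ne']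
      · rw [norm_smul, Real.norm_of_nonneg (by rw [sub_nonneg, div_le_one hc]; exact hcr.le),
          sub_mul, one_mul, div_mul_cancel₀ _ hc.ne', max_eq_left (by linarith)]
  rw [norm_minNorm_of_isMinOn hv fun w hw => (hvn.trans_le (hlow w hw) : ‖v‖ ≤ ‖w‖), hvn]

theorem hasGradientAt_half_mul_norm_sq [InnerProductSpace ℝ F] [CompleteSpace F] (α : ℝ) (x : F) :
    HasGradientAt (fun y : F => 1 / 2 * α * ‖y‖ ^ 2) (α • x) x := by
  rw [hasGradientAt_iff_hasFDerivAt]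
  refine ((hasStrictFDerivAt_norm_sq x).hasFDerivAt.const_mul (1 / 2 * α)).congr_fderiv ?_
  ext w
  simp
  ring

end

theorem clarkeSubdiff_eq_singleton {f : E → ℝ} {g : E → E} (hf : ∀ y, HasGradientAt f (g y) y)
    {x : E} (hg : ContinuousAt g x) : clarkeSubdiff f x = {g x} := by
  suffices h : {v : E | ∃ u : ℕ → E, (∀ n, DifferentiableAt ℝ f (u n)) ∧
      Tendsto u atTop (𝓝 x) ∧ Tendsto (fun n => gradient f (u n)) atTop (𝓝 v)} = {g x} by
    rw [clarkeSubdiff, h, convexHull_singleton, closure_singleton]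
  ext v
  constructor
  · rintro ⟨u, -, hux, hv⟩
    have hgx : Tendsto (fun n => gradient f (u n)) atTop (𝓝 (g x)) :=
      (hg.tendsto.comp hux).congr fun n => ((hf (u n)).gradient).symm
    exact tendsto_nhds_unique hv hgx
  · rintro rfl
    refine ⟨fun _ => x, fun _ => (hf x).differentiableAt, tendsto_const_nhds, ?_⟩
    simpa only [(hf x).gradient] using tendsto_const_nhds

theorem goldsteinSubdiff_eq_convexHull_image {f : E → ℝ} {g : E → E}
    (hf : ∀ y, HasGradientAt f (g y) y) (hg : Continuous g) (x : E) (ε : ℝ) :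
    goldsteinSubdiff f x ε = convexHull ℝ (g '' closedBall x ε) := by
  simp only [goldsteinSubdiff, clarkeSubdiff_eq_singleton hf hg.continuousAt,
    ← image_eq_iUnion]

theorem goldsteinSubdiff_half_mul_norm_sq (α : ℝ) (x : E) {ε : ℝ} (hε : 0 ≤ ε) :
    goldsteinSubdiff (fun y : E => 1 / 2 * α * ‖y‖ ^ 2) x ε = closedBall (α • x) (|α| * ε) := by
  rw [goldsteinSubdiff_eq_convexHull_image (hasGradientAt_half_mul_norm_sq α)
    (continuous_const_smul α), image_smul, smul_closedBall α x hε, Real.norm_eq_abs,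
    (convex_closedBall _ _).convexHull_eq]

theorem norm_goldsteinGrad_half_mul_norm_sq {α : ℝ} (hα : 0 ≤ α) (x : E) {ε : ℝ} (hε : 0 ≤ ε) :
    ‖goldsteinGrad (fun y : E => 1 / 2 * α * ‖y‖ ^ 2) x ε‖ = max (α * ‖x‖ - α * ε) 0 := by
  rw [goldsteinGrad, goldsteinSubdiff_half_mul_norm_sq α x hε, abs_of_nonneg hα,
    norm_minNorm_closedBall _ (mul_nonneg hα hε), norm_smul, Real.norm_of_nonneg hα]

theorem goldsteinModulus_half_mul_norm_sq {α : ℝ} (hα : 0 ≤ α) (x : E) :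
    goldsteinModulus (fun y : E => 1 / 2 * α * ‖y‖ ^ 2) x = α / (1 + α) * ‖x‖ := by
  suffices h : {ε : ℝ | 0 ≤ ε ∧ ‖goldsteinGrad (fun y : E => 1 / 2 * α * ‖y‖ ^ 2) x ε‖ ≤ ε}
      = Ici (α / (1 + α) * ‖x‖) by
    rw [goldsteinModulus, h, csInf_Ici]
  have hthreshold : ∀ ε, α / (1 + α) * ‖x‖ ≤ ε ↔ α * ‖x‖ - α * ε ≤ ε := by
    intro ε
    rw [div_mul_eq_mul_div, div_le_iff₀ (by linarith)]
    constructor <;> intro h <;> linarith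
  ext ε
  rw [mem_ofPred_eq, mem_Ici, hthreshold]
  constructor
  · rintro ⟨hε, hg⟩
    rw [norm_goldsteinGrad_half_mul_norm_sq hα x hε] at hg
    exact (le_max_left _ _).trans hg
  · intro hε
    have hε0 : 0 ≤ ε := by nlinarith [mul_nonneg hα (norm_nonneg x)]
    rw [norm_goldsteinGrad_half_mul_norm_sq hα x hε0]
    exact ⟨hε0, max_le hε hε0⟩

theorem stmt9 (α : ℝ) (hα : 0 < α) :
    (∀ x : E, goldsteinModulus (fun y : E => 1 / 2 * α * ‖y‖ ^ 2) x = α / (1 + α) * ‖x‖) ∧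
    ∃ c > 0, ∃ ρ > 0, ∀ x : E, ‖x‖ ≤ ρ →
      c * ‖x‖ ≤ goldsteinModulus (fun y : E => 1 / 2 * α * ‖y‖ ^ 2) x := by
  have hΓ := goldsteinModulus_half_mul_norm_sq (E := E) hα.le
  exact ⟨hΓ, α / (1 + α), by positivity, 1, one_pos, fun x _ => (hΓ x).ge⟩
end

section
/- Let α > 0 and define f₂ : ℝ → ℝ by f₂(x) = α·|x|. Then for every x ∈ ℝ the Goldstein modulus satisfies Γf₂(x) = min{|x|, α}; in particular Γf₂ grows linearly at the unique minimizer 0. -/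
/-!
Near any `x ≠ 0` the function `α * |y|` has the constant gradient `α * sign x`, so for `ε < |x|` the
Goldstein subdifferential at `x` is `{α * sign x}`, of norm `α`. Once the ball of radius `ε` around
`x` contains `0`, the Goldstein subdifferential contains the Clarke subgradients `±α` at `0`, hence
their midpoint `0`. Thus `‖g_ε(x)‖ ≤ ε` exactly when `min |x| α ≤ ε`.
-/

open Filter Topology Metric Set
open scoped Classical

variable {E : Type*} [NormedAddCommGroup E] [InnerProductSpace ℝ E] [FiniteDimensional ℝ E]

section Clarke

variable {f : E → ℝ} {x g v : E}

theorem mem_clarkeSubdiff_of_tendsto (u : ℕ → E) (hdiff : ∀ n, DifferentiableAt ℝ f (u n))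
    (hu : Tendsto u atTop (𝓝 x)) (hgrad : Tendsto (fun n => gradient f (u n)) atTop (𝓝 v)) :
    v ∈ clarkeSubdiff f x :=
  subset_closure (subset_convexHull ℝ _ ⟨u, hdiff, hu, hgrad⟩)

theorem clarkeSubdiff_eq_singleton_of_eventually_hasGradientAt
    (h : ∀ᶠ y in 𝓝 x, HasGradientAt f g y) : clarkeSubdiff f x = {g} := by
  have hlimits : {v : E | ∃ u : ℕ → E, (∀ n, DifferentiableAt ℝ f (u n)) ∧
      Tendsto u atTop (𝓝 x) ∧ Tendsto (fun n => gradient f (u n)) atTop (𝓝 v)} = {g} := by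
    ext v
    constructor
    · rintro ⟨u, -, hu, hgrad⟩
      have hconst : ∀ᶠ n in atTop, g = gradient f (u n) :=
        (hu.eventually h).mono fun n hn => hn.gradient.symm
      exact tendsto_nhds_unique hgrad (tendsto_const_nhds.congr' hconst)
    · rintro rfl
      have hx := h.self_of_nhds
      exact ⟨fun _ => x, fun _ => hx.differentiableAt, tendsto_const_nhds, by
        simpa only [hx.gradient] using tendsto_const_nhds⟩
  rw [clarkeSubdiff, hlimits, convexHull_singleton, closure_singleton]

theorem goldsteinSubdiff_eq_singleton {ε : ℝ} (hε : 0 ≤ ε)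
    (h : ∀ y ∈ closedBall x ε, clarkeSubdiff f y = {g}) : goldsteinSubdiff f x ε = {g} := by
  have hunion : ⋃ y ∈ closedBall x ε, clarkeSubdiff f y = {g} := by
    rw [iUnion₂_congr h]
    exact biUnion_const ⟨x, mem_closedBall_self hε⟩ _
  rw [goldsteinSubdiff, hunion, convexHull_singleton]

end Clarke

section MinNorm

variable {F : Type*} [NormedAddCommGroup F]

theorem minNorm_singleton (v : F) : minNorm {v} = v := by
  have hmin : ∃ u, u ∈ ({v} : Set F) ∧ ∀ w ∈ ({v} : Set F), ‖u‖ ≤ ‖w‖ :=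
    ⟨v, rfl, fun w hw => by rw [hw]⟩
  rw [minNorm, dif_pos hmin]
  exact hmin.choose_spec.1

theorem minNorm_eq_zero_of_zero_mem {s : Set F} (h : (0 : F) ∈ s) : minNorm s = 0 := by
  have hmin : ∃ u, u ∈ s ∧ ∀ w ∈ s, ‖u‖ ≤ ‖w‖ := ⟨0, h, fun w _ => by simp⟩
  rw [minNorm, dif_pos hmin]
  simpa using hmin.choose_spec.2 0 h

end MinNorm

section ConstMulAbs

variable (α : ℝ) {x : ℝ}

theorem sign_eq_of_abs_sub_lt {y : ℝ} (h : |y - x| < |x|) : SignType.sign y = SignType.sign x := by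
  rcases lt_trichotomy x 0 with hx | rfl | hx
  · rw [abs_of_neg hx] at h
    rw [sign_neg hx, sign_neg (by linarith [le_abs_self (y - x)])]
  · simp only [sub_zero, abs_zero] at h
    exact absurd h (abs_nonneg y).not_gt
  · rw [abs_of_pos hx] at h
    rw [sign_pos hx, sign_pos (by linarith [neg_abs_le (y - x)])]

theorem hasGradientAt_const_mul_abs (hx : x ≠ 0) :
    HasGradientAt (fun y : ℝ => α * |y|) (α * SignType.sign x) x :=
  ((hasDerivAt_abs hx).const_mul α).hasGradientAt'

theorem clarkeSubdiff_const_mul_abs_of_ne_zero (hx : x ≠ 0) :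
    clarkeSubdiff (fun y : ℝ => α * |y|) x = {α * SignType.sign x} := by
  refine clarkeSubdiff_eq_singleton_of_eventually_hasGradientAt ?_
  filter_upwards [ball_mem_nhds x (abs_pos.mpr hx)] with y hy
  rw [mem_ball, Real.dist_eq] at hy
  have hy0 : y ≠ 0 := by rintro rfl; simp at hy
  simpa only [sign_eq_of_abs_sub_lt hy] using hasGradientAt_const_mul_abs α hy0

theorem const_mul_sign_mem_clarkeSubdiff_zero {s : ℝ} (hs : s ≠ 0) :
    α * SignType.sign s ∈ clarkeSubdiff (fun y : ℝ => α * |y|) 0 := by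
  have hpos : ∀ n : ℕ, 0 < 1 / ((n : ℝ) + 1) := fun n => by positivity
  have hsign : ∀ n : ℕ, SignType.sign (s * (1 / ((n : ℝ) + 1))) = SignType.sign s := fun n => by
    rw [sign_mul, sign_pos (hpos n), mul_one]
  refine mem_clarkeSubdiff_of_tendsto (fun n => s * (1 / ((n : ℝ) + 1)))
    (fun n => (hasGradientAt_const_mul_abs α (mul_ne_zero hs (hpos n).ne')).differentiableAt)
    (by simpa using tendsto_one_div_add_atTop_nhds_zero_nat.const_mul s) ?_
  refine tendsto_const_nhds.congr fun n => ?_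
  rw [(hasGradientAt_const_mul_abs α (mul_ne_zero hs (hpos n).ne')).gradient, hsign]

theorem zero_mem_goldsteinSubdiff_const_mul_abs {ε : ℝ} (hx : |x| ≤ ε) :
    (0 : ℝ) ∈ goldsteinSubdiff (fun y : ℝ => α * |y|) x ε := by
  have h0 : (0 : ℝ) ∈ closedBall x ε := by
    rwa [mem_closedBall, Real.dist_eq, zero_sub, abs_neg]
  have hmem : ∀ {s : ℝ}, s ≠ 0 → α * SignType.sign s ∈
      ⋃ y ∈ closedBall x ε, clarkeSubdiff (fun y : ℝ => α * |y|) y := fun hs =>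
    mem_biUnion h0 (const_mul_sign_mem_clarkeSubdiff_zero α hs)
  refine segment_subset_convexHull (hmem one_ne_zero) (hmem (neg_ne_zero.mpr one_ne_zero))
    ⟨1 / 2, 1 / 2, by norm_num, by norm_num, by norm_num, ?_⟩
  simp only [sign_one, sign_neg neg_one_lt_zero, SignType.coe_neg, SignType.coe_one, smul_eq_mul]
  ring

theorem norm_goldsteinGrad_const_mul_abs {ε : ℝ} (hε : 0 ≤ ε) :
    ‖goldsteinGrad (fun y : ℝ => α * |y|) x ε‖ = if |x| ≤ ε then 0 else |α| := by
  split_ifs with hx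
  · rw [goldsteinGrad, minNorm_eq_zero_of_zero_mem (zero_mem_goldsteinSubdiff_const_mul_abs α hx),
      norm_zero]
  · have hfar : ∀ y ∈ closedBall x ε,
        clarkeSubdiff (fun y : ℝ => α * |y|) y = {α * SignType.sign x} := fun y hy => by
      rw [mem_closedBall, Real.dist_eq] at hy
      have hyx : |y - x| < |x| := hy.trans_lt (not_le.mp hx)
      have hy0 : y ≠ 0 := by rintro rfl; simp at hyx
      rw [clarkeSubdiff_const_mul_abs_of_ne_zero α hy0, sign_eq_of_abs_sub_lt hyx]
    have hx0 : x ≠ 0 := by rintro rfl; exact hx (by simpa using hε)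
    rw [goldsteinGrad, goldsteinSubdiff_eq_singleton hε hfar, minNorm_singleton, Real.norm_eq_abs]
    rcases hx0.lt_or_gt with hneg | hpos
    · simp [sign_neg hneg]
    · simp [sign_pos hpos]

theorem goldsteinModulus_const_mul_abs (hα : 0 < α) (x : ℝ) :
    goldsteinModulus (fun y : ℝ => α * |y|) x = min |x| α := by
  suffices h : {ε : ℝ | 0 ≤ ε ∧ ‖goldsteinGrad (fun y : ℝ => α * |y|) x ε‖ ≤ ε} = Ici (min |x| α) by
    rw [goldsteinModulus, h, csInf_Ici]
  ext ε
  constructor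
  · rintro ⟨hε, hgrad⟩
    rw [norm_goldsteinGrad_const_mul_abs α hε, abs_of_pos hα] at hgrad
    split_ifs at hgrad with hx
    exacts [min_le_of_left_le hx, min_le_of_right_le hgrad]
  · intro hmin
    have hε : 0 ≤ ε := (le_min (abs_nonneg x) hα.le).trans hmin
    refine ⟨hε, ?_⟩
    rw [norm_goldsteinGrad_const_mul_abs α hε, abs_of_pos hα]
    split_ifs with hx
    exacts [hε, (min_le_iff.mp hmin).resolve_left hx]

end ConstMulAbs

theorem stmt10 (α : ℝ) (hα : 0 < α) :
    (∀ x : ℝ, goldsteinModulus (fun y : ℝ => α * |y|) x = min |x| α) ∧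
    ∃ c > 0, ∃ ρ > 0, ∀ x : ℝ, |x| ≤ ρ →
      c * |x| ≤ goldsteinModulus (fun y : ℝ => α * |y|) x := by
  refine ⟨goldsteinModulus_const_mul_abs α hα, 1, one_pos, α, hα, fun x hx => ?_⟩
  rw [goldsteinModulus_const_mul_abs α hα, one_mul, min_eq_left hx]
end

section
/- Let α > 0 and define f₃ : E → ℝ by f₃(x) = (1/4)·α·‖x‖⁴. Then for every x ∈ E the Goldstein modulus satisfies Γf₃(x) ≤ α·‖x‖³; in particular the growth of Γf₃ at the unique minimizer 0 is slower than linear. -/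
/-! A function differentiable at `x` has its gradient at `x` in the Clarke subdifferential (constant
sequence), hence in every Goldstein subdifferential of nonnegative radius; the minimal-norm element
is then no longer than the gradient, so `ε = ‖∇f(x)‖` is admissible in the infimum defining `Γf(x)`.
For `f₃` the gradient is `α ‖x‖² x`, of norm `α ‖x‖³`. -/

open Filter Topology Metric Set
open scoped Classical

variable {E : Type*} [NormedAddCommGroup E] [InnerProductSpace ℝ E] [FiniteDimensional ℝ E]

theorem norm_minNorm_le {F : Type*} [NormedAddCommGroup F] {s : Set F} {v : F} (hv : v ∈ s) :
    ‖minNorm s‖ ≤ ‖v‖ := by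
  rw [minNorm]
  split_ifs with h
  · exact h.choose_spec.2 v hv
  · simp

theorem gradient_mem_clarkeSubdiff {f : E → ℝ} {x : E} (hf : DifferentiableAt ℝ f x) :
    gradient f x ∈ clarkeSubdiff f x :=
  subset_closure <| subset_convexHull ℝ _
    ⟨fun _ => x, fun _ => hf, tendsto_const_nhds, tendsto_const_nhds⟩

theorem clarkeSubdiff_subset_goldsteinSubdiff (f : E → ℝ) (x : E) {ε : ℝ} (hε : 0 ≤ ε) :
    clarkeSubdiff f x ⊆ goldsteinSubdiff f x ε :=
  (subset_biUnion_of_mem (u := fun y => clarkeSubdiff f y) (mem_closedBall_self hε)).trans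
    (subset_convexHull ℝ _)

theorem goldsteinModulus_le {f : E → ℝ} {x : E} {ε : ℝ} (hε : 0 ≤ ε)
    (hg : ‖goldsteinGrad f x ε‖ ≤ ε) : goldsteinModulus f x ≤ ε :=
  csInf_le ⟨0, fun _ h => h.1⟩ ⟨hε, hg⟩

theorem goldsteinModulus_le_norm_gradient {f : E → ℝ} {x : E} (hf : DifferentiableAt ℝ f x) :
    goldsteinModulus f x ≤ ‖gradient f x‖ :=
  goldsteinModulus_le (norm_nonneg _) <| norm_minNorm_le <|
    clarkeSubdiff_subset_goldsteinSubdiff f x (norm_nonneg _) (gradient_mem_clarkeSubdiff hf)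

theorem hasGradientAt_const_mul_norm_pow_four {F : Type*} [NormedAddCommGroup F]
    [InnerProductSpace ℝ F] [CompleteSpace F] (c : ℝ) (x : F) :
    HasGradientAt (fun y : F => c * ‖y‖ ^ 4) ((4 * c * ‖x‖ ^ 2) • x) x := by
  rw [hasGradientAt_iff_hasFDerivAt]
  have h := ((hasStrictFDerivAt_norm_sq x).hasFDerivAt.pow 2).const_mul c
  simp only [← pow_mul] at h
  refine h.congr_fderiv ?_
  ext v
  simp
  ring

theorem stmt11 (α : ℝ) (hα : 0 < α) (x : E) :
    goldsteinModulus (fun y : E => 1 / 4 * α * ‖y‖ ^ 4) x ≤ α * ‖x‖ ^ 3 := by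
  have hgrad := hasGradientAt_const_mul_norm_pow_four (1 / 4 * α) x
  calc goldsteinModulus (fun y : E => 1 / 4 * α * ‖y‖ ^ 4) x
      ≤ ‖(4 * (1 / 4 * α) * ‖x‖ ^ 2) • x‖ := by
        simpa only [hgrad.gradient] using goldsteinModulus_le_norm_gradient hgrad.differentiableAt
    _ = α * ‖x‖ ^ 3 := by
        rw [norm_smul, Real.norm_of_nonneg (by positivity)]
        ring
end

section
/- Let E be a finite-dimensional real inner product space, let x̄ ∈ E, and let ρ > 0, L > 0, δ > 0 and θ ∈ (0,1). Suppose f : E → ℝ is Lipschitz with constant L on the closed ball B(x̄, ρ) and satisfies the quadratic growth bound f(x) − f(x̄) ≥ (δ/2)·‖x − x̄‖² for all x ∈ B(x̄, ρ). Let (x_r)_{r≥0} be a sequence of points of B(x̄, ρ) such that for every r: f(x_{r+1}) ≤ f(x_r), and at least one of the inequalities f(x_{r+1}) − f(x̄) ≤ θ·(f(x_r) − f(x̄)) or ‖x_{r+1} − x̄‖ ≤ θ·‖x_r − x̄‖ holds. Then there exist constants a > 0 and b > 0 such that ‖x_r − x̄‖ ≤ a·exp(−b·√r) for all r ≥ 0.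 -/
open Filter Topology Metric Set
open scoped Classical

variable {E : Type*} [NormedAddCommGroup E] [InnerProductSpace ℝ E] [FiniteDimensional ℝ E]

/-!
Put `n_r = ‖x_r - x̄‖` and `F_r = f x_r - f x̄`, so that `δ/2 · n² ≤ F ≤ L n` and `F` is
nonincreasing. After rescaling, `p = -log n` and `q = -log F` satisfy `p ≤ q ≤ 2p`, `q` is
nondecreasing, and every step raises `q` or `p` by `c = -log θ`. The potential
`q² + 4cp - 2cq` then gains at least `c²` per step while staying below `(q + c)²`, whence
`q_r ≥ c (√r - 1)` and `n_r ≤ θ ^ ((√r - 1) / 2)`. If `n` vanishes once, then so does `F`, and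
from then on both stay zero.
-/

open Real

def sqrtPotential (c p q : ℝ) : ℝ := q ^ 2 + 4 * c * p - 2 * c * q

lemma sqrtPotential_nonneg {c p q : ℝ} (hc : 0 ≤ c) (hqp : q ≤ 2 * p) :
    0 ≤ sqrtPotential c p q := by
  unfold sqrtPotential
  nlinarith [mul_nonneg hc (sub_nonneg.2 hqp)]

lemma sqrtPotential_le_add_sq {c p q : ℝ} (hc : 0 ≤ c) (hpq : p ≤ q) :
    sqrtPotential c p q ≤ (q + c) ^ 2 := by
  unfold sqrtPotential
  nlinarith [mul_le_mul_of_nonneg_left hpq hc]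

lemma sqrtPotential_add_sq_le {c p q p' q' : ℝ} (hc : 0 < c) (hpq : p ≤ q) (hqp : q ≤ 2 * p)
    (hqp' : q' ≤ 2 * p') (hq : q ≤ q') (hstep : q + c ≤ q' ∨ p + c ≤ p') :
    sqrtPotential c p q + c ^ 2 ≤ sqrtPotential c p' q' := by
  unfold sqrtPotential
  have hq0 : 0 ≤ q := by linarith
  rcases hstep with h | h
  · nlinarith
  · rcases le_total c q with hcq | hqc
    · nlinarith [mul_nonneg (sub_nonneg.2 hq) (by linarith : 0 ≤ q' + q - 2 * c)]
    · nlinarith [sq_nonneg (q' - c), mul_nonneg hq0 (by linarith : 0 ≤ 2 * c - q)]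

lemma mul_sqrt_sub_one_le_of_increments {c : ℝ} {p q : ℕ → ℝ} (hc : 0 < c)
    (hpq : ∀ r, p r ≤ q r) (hqp : ∀ r, q r ≤ 2 * p r) (hq : Monotone q)
    (hstep : ∀ r, q r + c ≤ q (r + 1) ∨ p r + c ≤ p (r + 1)) (r : ℕ) :
    c * (√(r : ℝ) - 1) ≤ q r := by
  have hΦ : ∀ r : ℕ, r * c ^ 2 ≤ sqrtPotential c (p r) (q r) := by
    intro r
    induction r with
    | zero => simpa using sqrtPotential_nonneg hc.le (hqp 0)
    | succ r ih =>
      have := sqrtPotential_add_sq_le hc (hpq r) (hqp r) (hqp (r + 1)) (hq r.le_succ) (hstep r)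
      push_cast
      linarith
  have hq0 : 0 ≤ q r := by linarith [hpq r, hqp r]
  have hsq : (√(r : ℝ) * c) ^ 2 ≤ (q r + c) ^ 2 := by
    rw [mul_pow, sq_sqrt r.cast_nonneg]
    exact (hΦ r).trans (sqrtPotential_le_add_sq hc.le (hpq r))
  have := (pow_le_pow_iff_left₀ (by positivity) (by positivity) two_ne_zero).1 hsq
  linarith

lemma le_exp_sqrt_of_le_of_sq_le {θ : ℝ} {u v : ℕ → ℝ} (hθ₀ : 0 < θ) (hθ₁ : θ < 1)
    (hu : ∀ r, 0 < u r) (hvu : ∀ r, v r ≤ u r) (huv : ∀ r, u r ^ 2 ≤ v r) (hv : Antitone v)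
    (hstep : ∀ r, v (r + 1) ≤ θ * v r ∨ u (r + 1) ≤ θ * u r) (r : ℕ) :
    u r ≤ exp (log θ * (√(r : ℝ) - 1) / 2) := by
  have hv0 : ∀ r, 0 < v r := fun r => (pow_pos (hu r) 2).trans_le (huv r)
  have two_mul_log_le : ∀ r, 2 * log (u r) ≤ log (v r) := fun r => by
    simpa [log_pow] using log_le_log (pow_pos (hu r) 2) (huv r)
  have log_le_of_le_mul : ∀ {a b : ℝ}, 0 < a → 0 < b → b ≤ θ * a → log b ≤ log θ + log a :=
    fun ha hb h => (log_le_log hb h).trans_eq (log_mul hθ₀.ne' ha.ne')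
  have key := mul_sqrt_sub_one_le_of_increments (c := -log θ) (p := fun r => -log (u r))
    (q := fun r => -log (v r)) (neg_pos.2 (log_neg hθ₀ hθ₁))
    (fun r => neg_le_neg (log_le_log (hv0 r) (hvu r)))
    (fun r => by linarith [two_mul_log_le r])
    (monotone_nat_of_le_succ fun r => neg_le_neg (log_le_log (hv0 _) (hv r.le_succ)))
    (fun r => (hstep r).imp
      (fun h => by linarith [log_le_of_le_mul (hv0 r) (hv0 (r + 1)) h])
      (fun h => by linarith [log_le_of_le_mul (hu r) (hu (r + 1)) h])) r
  rw [← log_le_iff_le_exp (hu r)]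
  linarith [two_mul_log_le r]

lemma exists_exp_sqrt_bound_of_pos {K L θ : ℝ} {u v : ℕ → ℝ} (hK : 0 < K) (hθ₀ : 0 < θ)
    (hθ₁ : θ < 1) (hu : ∀ r, 0 < u r) (hvu : ∀ r, v r ≤ L * u r) (huv : ∀ r, K * u r ^ 2 ≤ v r)
    (hv : Antitone v) (hstep : ∀ r, v (r + 1) ≤ θ * v r ∨ u (r + 1) ≤ θ * u r) :
    ∃ a > 0, ∃ b > 0, ∀ r : ℕ, u r ≤ a * exp (-b * √(r : ℝ)) := by
  have hL : 0 < L := by nlinarith [(huv 0).trans (hvu 0), hu 0, mul_pos hK (pow_pos (hu 0) 2)]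
  have hnorm := le_exp_sqrt_of_le_of_sq_le (u := fun r => K / L * u r)
    (v := fun r => K / L ^ 2 * v r) hθ₀ hθ₁ (fun r => by have := hu r; positivity)
    (fun r => by
      have := hvu r
      calc K / L ^ 2 * v r ≤ K / L ^ 2 * (L * u r) := by gcongr
        _ = K / L * u r := by field_simp)
    (fun r => by
      have := huv r
      calc (K / L * u r) ^ 2 = K / L ^ 2 * (K * u r ^ 2) := by ring
        _ ≤ K / L ^ 2 * v r := by gcongr)
    (fun s t hst => mul_le_mul_of_nonneg_left (hv hst) (by positivity))
    (fun r => (hstep r).imp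
      (fun h => by rw [mul_left_comm]; gcongr)
      (fun h => by rw [mul_left_comm]; gcongr))
  refine ⟨L / K * exp (-log θ / 2), by positivity, -log θ / 2,
    by linarith [log_neg hθ₀ hθ₁], fun r => ?_⟩
  calc u r = L / K * (K / L * u r) := by field_simp
    _ ≤ L / K * exp (log θ * (√(r : ℝ) - 1) / 2) := by gcongr; exact hnorm r
    _ = L / K * exp (-log θ / 2) * exp (-(-log θ / 2) * √(r : ℝ)) := by
      rw [mul_assoc, ← exp_add]; ring_nf

lemma exists_exp_sqrt_bound_of_eventually_zero {u : ℕ → ℝ} (hu : ∀ r, 0 ≤ u r) (r₀ : ℕ)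
    (h : ∀ r, r₀ ≤ r → u r = 0) : ∃ a > 0, ∃ b > 0, ∀ r : ℕ, u r ≤ a * exp (-b * √(r : ℝ)) := by
  set M := ∑ s ∈ Finset.range r₀, u s
  have hM : 0 ≤ M := Finset.sum_nonneg fun s _ => hu s
  refine ⟨(M + 1) * exp √(r₀ : ℝ), by positivity, 1, one_pos, fun r => ?_⟩
  rcases lt_or_ge r r₀ with hr | hr
  · have hle : u r ≤ M := Finset.single_le_sum (fun s _ => hu s) (Finset.mem_range.2 hr)
    have hexp : 1 ≤ exp √(r₀ : ℝ) * exp (-1 * √(r : ℝ)) := by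
      rw [← exp_add]
      exact one_le_exp (by linarith [sqrt_le_sqrt (Nat.cast_le.2 hr.le : (r : ℝ) ≤ r₀)])
    calc u r ≤ (M + 1) * 1 := by linarith
      _ ≤ (M + 1) * (exp √(r₀ : ℝ) * exp (-1 * √(r : ℝ))) := by gcongr
      _ = _ := by ring
  · rw [h r hr]
    positivity

theorem exists_exp_sqrt_bound {K L θ : ℝ} {u v : ℕ → ℝ} (hK : 0 < K) (hθ₀ : 0 < θ)
    (hθ₁ : θ < 1) (hu : ∀ r, 0 ≤ u r) (hvu : ∀ r, v r ≤ L * u r) (huv : ∀ r, K * u r ^ 2 ≤ v r)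
    (hv : Antitone v) (hstep : ∀ r, v (r + 1) ≤ θ * v r ∨ u (r + 1) ≤ θ * u r) :
    ∃ a > 0, ∃ b > 0, ∀ r : ℕ, u r ≤ a * exp (-b * √(r : ℝ)) := by
  by_cases hpos : ∀ r, 0 < u r
  · exact exists_exp_sqrt_bound_of_pos hK hθ₀ hθ₁ hpos hvu huv hv hstep
  obtain ⟨r₀, hr₀⟩ := not_forall.1 hpos
  refine exists_exp_sqrt_bound_of_eventually_zero hu r₀ fun r hr => ?_
  have hsq : K * u r ^ 2 ≤ 0 :=
    calc K * u r ^ 2 ≤ v r₀ := (huv r).trans (hv hr)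
      _ ≤ L * u r₀ := hvu r₀
      _ = 0 := by rw [le_antisymm (not_lt.1 hr₀) (hu r₀), mul_zero]
  exact pow_eq_zero_iff two_ne_zero |>.1 (le_antisymm (by nlinarith) (sq_nonneg _))

theorem stmt12_general (xbar : E) (ρ L δ θ : ℝ) (hδ : 0 < δ)
    (hθ₀ : 0 < θ) (hθ₁ : θ < 1) (f : E → ℝ)
    (hf : LipschitzOnWith L.toNNReal f (Metric.closedBall xbar ρ))
    (hgrow : ∀ x ∈ Metric.closedBall xbar ρ, f x - f xbar ≥ δ / 2 * ‖x - xbar‖ ^ 2)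
    (x : ℕ → E) (hxball : ∀ r : ℕ, x r ∈ Metric.closedBall xbar ρ)
    (hdec : ∀ r : ℕ, f (x (r + 1)) ≤ f (x r))
    (hstep : ∀ r : ℕ, f (x (r + 1)) - f xbar ≤ θ * (f (x r) - f xbar) ∨
      ‖x (r + 1) - xbar‖ ≤ θ * ‖x r - xbar‖) :
    ∃ a > 0, ∃ b > 0, ∀ r : ℕ, ‖x r - xbar‖ ≤ a * Real.exp (-b * Real.sqrt r) := by
  have hxbar : xbar ∈ closedBall xbar ρ := mem_closedBall_self (nonempty_closedBall.1 ⟨_, hxball 0⟩)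
  have hlip : ∀ r, f (x r) - f xbar ≤ L.toNNReal * ‖x r - xbar‖ := fun r => by
    simpa [dist_eq_norm] using (le_abs_self _).trans (hf.dist_le_mul _ (hxball r) _ hxbar)
  exact exists_exp_sqrt_bound (half_pos hδ) hθ₀ hθ₁ (fun r => norm_nonneg _) hlip
    (fun r => hgrow _ (hxball r)) (antitone_nat_of_succ_le fun r => by linarith [hdec r]) hstep

theorem stmt12 (xbar : E) (ρ L δ θ : ℝ) (hρ : 0 < ρ) (hL : 0 < L) (hδ : 0 < δ)
    (hθ₀ : 0 < θ) (hθ₁ : θ < 1) (f : E → ℝ)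
    (hf : LipschitzOnWith L.toNNReal f (Metric.closedBall xbar ρ))
    (hgrow : ∀ x ∈ Metric.closedBall xbar ρ, f x - f xbar ≥ δ / 2 * ‖x - xbar‖ ^ 2)
    (x : ℕ → E) (hxball : ∀ r : ℕ, x r ∈ Metric.closedBall xbar ρ)
    (hdec : ∀ r : ℕ, f (x (r + 1)) ≤ f (x r))
    (hstep : ∀ r : ℕ, f (x (r + 1)) - f xbar ≤ θ * (f (x r) - f xbar) ∨
      ‖x (r + 1) - xbar‖ ≤ θ * ‖x r - xbar‖) :
    ∃ a > 0, ∃ b > 0, ∀ r : ℕ, ‖x r - xbar‖ ≤ a * Real.exp (-b * Real.sqrt r) :=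
  stmt12_general xbar ρ L δ θ hδ hθ₀ hθ₁ f hf hgrow x hxball hdec hstep
end

section
/- Let E be a finite-dimensional real inner product space, let k ≥ 1, and let Λ : E^k → E be the map sending a list v = (v¹, …, v^k) to the unique element of minimal norm of convexHull{v¹, …, v^k}. Suppose v̄ = (v̄¹, …, v̄^k) is a list of affinely independent vectors such that Λ(v̄) lies in the relative interior (intrinsic interior) of convexHull{v̄¹, …, v̄^k}. Then there is an open neighborhood U of v̄ in E^k on which Λ is C^∞-smooth. -/
open Filter Topology Metric Set
open scoped Classical

variable {E : Type*} [NormedAddCommGroup E] [InnerProductSpace ℝ E] [FiniteDimensional ℝ E]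

open Matrix
open scoped RealInnerProductSpace
set_option linter.unusedSectionVars false
set_option maxHeartbeats 1000000

section AuxLemmas


lemma minNorm_spec_s14 {s : Set E} (h : ∃ v, v ∈ s ∧ ∀ w ∈ s, ‖v‖ ≤ ‖w‖) :
    minNorm s ∈ s ∧ ∀ w ∈ s, ‖minNorm s‖ ≤ ‖w‖ := by
  rw [minNorm, dif_pos h]; exact h.choose_spec

lemma min_unique {s : Set E} (hconv : Convex ℝ s) {p q : E} (hp : p ∈ s) (hq : q ∈ s)
    (hpmin : ∀ w ∈ s, ‖p‖ ≤ ‖w‖) (hqmin : ∀ w ∈ s, ‖q‖ ≤ ‖w‖) : p = q := by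
  have hmid : (1/2 : ℝ) • p + (1/2 : ℝ) • q ∈ s :=
    hconv hp hq (by norm_num) (by norm_num) (by norm_num)
  have hnorm : ‖p‖ = ‖q‖ := le_antisymm (hpmin q hq) (hqmin p hp)
  have h1 : ‖p‖ ≤ ‖(1/2 : ℝ) • p + (1/2 : ℝ) • q‖ := hpmin _ hmid
  have h2 : (1/2 : ℝ) • p + (1/2 : ℝ) • q = (1/2 : ℝ) • (p + q) := by
    rw [smul_add]
  have h3 : 2 * ‖p‖ ≤ ‖p + q‖ := by
    rw [h2, norm_smul] at h1
    have hh : ‖(1/2 : ℝ)‖ = 1/2 := by norm_num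
    rw [hh] at h1
    nlinarith [norm_nonneg (p+q)]
  have hpar : ‖p + q‖^2 + ‖p - q‖^2 = 2*‖p‖^2 + 2*‖q‖^2 := by
    rw [@norm_add_sq_real, @norm_sub_sq_real]; ring
  have : ‖p - q‖^2 ≤ 0 := by nlinarith [norm_nonneg p]
  have : ‖p - q‖ = 0 := le_antisymm (by nlinarith [norm_nonneg (p - q)]) (norm_nonneg _)
  exact sub_eq_zero.mp (norm_eq_zero.mp this)

lemma minNorm_eq {s : Set E} (hconv : Convex ℝ s) {p : E} (hp : p ∈ s)
    (hpmin : ∀ w ∈ s, ‖p‖ ≤ ‖w‖) : minNorm s = p := by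
  have h : ∃ v, v ∈ s ∧ ∀ w ∈ s, ‖v‖ ≤ ‖w‖ := ⟨p, hp, hpmin⟩
  obtain ⟨hm, hmin⟩ := minNorm_spec_s14 h
  exact min_unique hconv hm hp hmin hpmin

lemma eventually_mem_of_intrinsicInterior {s : Set E} {x : E}
    (hx : x ∈ intrinsicInterior ℝ s) {w : E} (hw : w ∈ (affineSpan ℝ s).direction) :
    ∀ᶠ t in 𝓝 (0:ℝ), x + t • w ∈ s := by
  rw [mem_intrinsicInterior] at hx
  obtain ⟨y, hy, hyx⟩ := hx
  have hxs : x ∈ affineSpan ℝ s := hyx ▸ y.2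
  have hmem : ∀ t : ℝ, x + t • w ∈ affineSpan ℝ s := by
    intro t
    have := AffineSubspace.vadd_mem_of_mem_direction (Submodule.smul_mem _ t hw) hxs
    rwa [vadd_eq_add, add_comm] at this
  set f : ℝ → affineSpan ℝ s := fun t => ⟨x + t • w, hmem t⟩ with hf
  have hfc : Continuous f := by
    apply Continuous.subtype_mk
    fun_prop
  have h0 : f 0 = y := Subtype.ext (by simp [hf, hyx])
  have hnb : f ⁻¹' (interior ((↑) ⁻¹' s : Set <| affineSpan ℝ s)) ∈ 𝓝 (0:ℝ) :=
    hfc.continuousAt.preimage_mem_nhds (isOpen_interior.mem_nhds (h0 ▸ hy))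
  filter_upwards [hnb] with t ht
  have h2 : f t ∈ Subtype.val ⁻¹' s := interior_subset (Set.mem_preimage.mp ht)
  simpa [hf] using h2

lemma mem_convexHull_range_iff {k : ℕ} (v : Fin k → E) (x : E) :
    x ∈ convexHull ℝ (Set.range v) ↔
      ∃ a : Fin k → ℝ, (∀ i, 0 ≤ a i) ∧ ∑ i, a i = 1 ∧ ∑ i, a i • v i = x := by
  rw [convexHull_range_eq_exists_affineCombination]
  constructor
  · rintro ⟨s, w, h0, h1, rfl⟩
    refine ⟨fun i => if i ∈ s then w i else 0, ?_, ?_, ?_⟩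
    · intro i; dsimp only; split_ifs with hi
      exacts [h0 i hi, le_rfl]
    · rw [Finset.sum_ite_mem, Finset.univ_inter, h1]
    · rw [Finset.affineCombination_eq_linear_combination s v w h1]
      calc ∑ i, (if i ∈ s then w i else 0) • v i
          = ∑ i, (if i ∈ s then w i • v i else 0) := by
            apply Finset.sum_congr rfl; intro i _; rw [ite_smul, zero_smul]
        _ = ∑ i ∈ s, w i • v i := by rw [Finset.sum_ite_mem, Finset.univ_inter]
  · rintro ⟨a, h0, h1, rfl⟩
    exact ⟨Finset.univ, a, fun i _ => h0 i, h1,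
      Finset.affineCombination_eq_linear_combination _ v a h1⟩

lemma contDiff_det {m : ℕ} {F : Type*} [NormedAddCommGroup F] [NormedSpace ℝ F]
    {n : WithTop ℕ∞} {M : F → Matrix (Fin m) (Fin m) ℝ}
    (h : ∀ i j, ContDiff ℝ n fun v => M v i j) :
    ContDiff ℝ n fun v => (M v).det := by
  have heq : (fun v => (M v).det) =
      fun v => ∑ σ : Equiv.Perm (Fin m), (((Equiv.Perm.sign σ : ℤ) : ℝ)) * ∏ i, M v (σ i) i := by
    ext v; rw [Matrix.det_apply']
  rw [heq]
  apply ContDiff.sum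
  intro σ _
  exact contDiff_const.mul (contDiff_prod fun i _ => h (σ i) i)


variable {m : ℕ}

noncomputable def dv (v : Fin (m+1) → E) (i : Fin m) : E := v i.succ - v 0

noncomputable def Gm (v : Fin (m+1) → E) : Matrix (Fin m) (Fin m) ℝ :=
  Matrix.of fun i j => ⟪dv v i, dv v j⟫

noncomputable def bv (v : Fin (m+1) → E) (i : Fin m) : ℝ := -⟪v 0, dv v i⟫

noncomputable def cnum (v : Fin (m+1) → E) (i : Fin m) : ℝ :=
  ((Gm v).updateCol i (bv v)).det

noncomputable def cv (v : Fin (m+1) → E) (i : Fin m) : ℝ := cnum v i / (Gm v).det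

noncomputable def pv (v : Fin (m+1) → E) : E := v 0 + ∑ i, cv v i • dv v i

lemma cv_eq (v : Fin (m+1) → E) :
    cv v = ((Gm v).det)⁻¹ • (Gm v).cramer (bv v) := by
  funext i
  rw [cv, cnum, Pi.smul_apply, Matrix.cramer_apply, smul_eq_mul, div_eq_inv_mul]

lemma G_mulVec {v : Fin (m+1) → E} (h : (Gm v).det ≠ 0) : Gm v *ᵥ cv v = bv v := by
  rw [cv_eq, Matrix.mulVec_smul, Matrix.mulVec_cramer, smul_smul, inv_mul_cancel₀ h, one_smul]

lemma inner_pv_dv {v : Fin (m+1) → E} (h : (Gm v).det ≠ 0) (i : Fin m) :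
    ⟪pv v, dv v i⟫ = 0 := by
  have h1 : ∑ j, cv v j * ⟪dv v j, dv v i⟫ = bv v i := by
    have := congrFun (G_mulVec h) i
    simp only [Matrix.mulVec, dotProduct, Gm, Matrix.of_apply] at this
    rw [← this]
    apply Finset.sum_congr rfl
    intro j _
    rw [real_inner_comm, mul_comm]
  rw [pv, inner_add_left, sum_inner]
  simp_rw [real_inner_smul_left]
  rw [h1, bv]
  ring

lemma span_dv (v : Fin (m+1) → E) :
    Submodule.span ℝ (Set.range (dv v)) = vectorSpan ℝ (Set.range v) := by
  rw [vectorSpan_range_eq_span_range_vsub_right ℝ v 0]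
  apply le_antisymm
  · apply Submodule.span_mono
    rintro _ ⟨i, rfl⟩
    exact ⟨i.succ, by simp [dv, vsub_eq_sub]⟩
  · rw [Submodule.span_le]
    rintro _ ⟨i, rfl⟩
    induction i using Fin.cases with
    | zero => simp
    | succ j =>
      exact Submodule.subset_span ⟨j, by simp [dv, vsub_eq_sub]⟩

lemma pv_mem (v : Fin (m+1) → E) : pv v ∈ affineSpan ℝ (Set.range v) := by
  have h0 : v 0 ∈ affineSpan ℝ (Set.range v) := mem_affineSpan ℝ (mem_range_self 0)
  have hd : ∀ i, dv v i ∈ (affineSpan ℝ (Set.range v)).direction := by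
    intro i
    rw [direction_affineSpan, ← span_dv]
    exact Submodule.subset_span (mem_range_self i)
  have hsum : (∑ i, cv v i • dv v i) ∈ (affineSpan ℝ (Set.range v)).direction :=
    Submodule.sum_mem _ fun i _ => Submodule.smul_mem _ _ (hd i)
  have h2 := AffineSubspace.vadd_mem_of_mem_direction hsum h0
  rw [vadd_eq_add] at h2
  have heq : pv v = ∑ i, cv v i • dv v i + v 0 := by rw [pv]; abel
  rw [heq]; exact h2

lemma pv_min {v : Fin (m+1) → E} (h : (Gm v).det ≠ 0) :
    ∀ w ∈ affineSpan ℝ (Set.range v), ‖pv v‖ ≤ ‖w‖ := by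
  intro w hw
  have hsub : w - pv v ∈ Submodule.span ℝ (Set.range (dv v)) := by
    rw [span_dv, ← direction_affineSpan]
    have := AffineSubspace.vsub_mem_direction hw (pv_mem v)
    rwa [vsub_eq_sub] at this
  obtain ⟨t, ht⟩ := (Submodule.mem_span_range_iff_exists_fun ℝ).mp hsub
  have horth : ⟪pv v, w - pv v⟫ = 0 := by
    rw [← ht, inner_sum]
    simp [real_inner_smul_right, inner_pv_dv h]
  have hsq : ‖w‖^2 = ‖pv v‖^2 + ‖w - pv v‖^2 := by
    have hw' : w = pv v + (w - pv v) := by abel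
    calc ‖w‖^2 = ‖pv v + (w - pv v)‖^2 := by rw [← hw']
      _ = ‖pv v‖^2 + 2 * ⟪pv v, w - pv v⟫ + ‖w - pv v‖^2 := norm_add_sq_real _ _
      _ = ‖pv v‖^2 + ‖w - pv v‖^2 := by rw [horth]; ring
  nlinarith [norm_nonneg w, norm_nonneg (pv v), sq_nonneg (‖w - pv v‖)]

lemma gram_posDef {v : Fin (m+1) → E} (hli : LinearIndependent ℝ (dv v)) :
    (Gm v).PosDef := by
  rw [Matrix.posDef_iff_dotProduct_mulVec]
  constructor
  · ext i j
    simp [Matrix.conjTranspose_apply, Gm, real_inner_comm]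
  · intro x hx
    have hne : ∑ i, x i • dv v i ≠ 0 := by
      intro h0
      exact hx (funext (Fintype.linearIndependent_iff.mp hli x h0))
    have hpos : (0:ℝ) < ⟪(∑ i, x i • dv v i), (∑ j, x j • dv v j)⟫ :=
      by rw [real_inner_self_eq_norm_sq]; exact pow_pos (norm_pos_iff.mpr hne) 2
    have heq : (star x) ⬝ᵥ (Gm v *ᵥ x)
        = ⟪(∑ i, x i • dv v i), (∑ j, x j • dv v j)⟫ := by
      simp only [dotProduct, Matrix.mulVec, Gm, Matrix.of_apply, sum_inner, inner_sum,
        real_inner_smul_left, real_inner_smul_right, star_trivial, Finset.mul_sum]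
      apply Finset.sum_congr rfl; intro i _
      apply Finset.sum_congr rfl; intro j _
      rw [real_inner_comm]; ring
    rw [heq]
    exact hpos

lemma coords_unique {v : Fin (m+1) → E} (hli : LinearIndependent ℝ (dv v))
    {a b : Fin (m+1) → ℝ} (ha : ∑ i, a i = 1) (hb : ∑ i, b i = 1)
    (heq : ∑ i, a i • v i = ∑ i, b i • v i) : a = b := by
  set f : Fin (m+1) → ℝ := fun i => a i - b i with hfdef
  have hf0 : ∑ i, f i = 0 := by
    simp [hfdef, Finset.sum_sub_distrib, ha, hb]
  have hfv : ∑ i, f i • v i = 0 := by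
    simp [hfdef, sub_smul, Finset.sum_sub_distrib, heq]
  have hsum : ∑ i, f i • (v i - v 0) = 0 := by
    simp only [smul_sub, Finset.sum_sub_distrib, ← Finset.sum_smul, hf0, hfv, zero_smul, sub_zero]
  have hd : ∑ j : Fin m, f j.succ • dv v j = 0 := by
    rw [Fin.sum_univ_succ] at hsum
    simpa [dv] using hsum
  have hz := Fintype.linearIndependent_iff.mp hli (fun j => f j.succ) hd
  have h0 : f 0 = 0 := by
    rw [Fin.sum_univ_succ] at hf0
    simpa [hz] using hf0
  have hall : ∀ i, f i = 0 := by
    intro i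
    induction i using Fin.cases with
    | zero => exact h0
    | succ j => exact hz j
  funext i
  exact sub_eq_zero.mp (hall i)

lemma pv_sum_one (v : Fin (m+1) → E) :
    ∑ i, (Fin.cases (1 - ∑ j, cv v j) (fun j => cv v j) i : ℝ) = 1 := by
  rw [Fin.sum_univ_succ]
  simp

lemma pv_combo (v : Fin (m+1) → E) :
    ∑ i, (Fin.cases (1 - ∑ j, cv v j) (fun j => cv v j) i : ℝ) • v i = pv v := by
  rw [Fin.sum_univ_succ]
  simp only [Fin.cases_zero, Fin.cases_succ]
  rw [pv]
  simp only [dv, smul_sub, Finset.sum_sub_distrib, sub_smul, one_smul, ← Finset.sum_smul]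
  abel


end AuxLemmas

theorem stmt14 (k : ℕ) (hk : 1 ≤ k) (vbar : Fin k → E)
    (hindep : AffineIndependent ℝ vbar)
    (hri : minNorm (convexHull ℝ (Set.range vbar)) ∈
      intrinsicInterior ℝ (convexHull ℝ (Set.range vbar))) :
    ∃ U : Set (Fin k → E), IsOpen U ∧ vbar ∈ U ∧
      ContDiffOn ℝ (⊤ : ℕ∞) (fun v : Fin k → E => minNorm (convexHull ℝ (Set.range v))) U := by
  obtain ⟨m, rfl⟩ : ∃ m, k = m + 1 := ⟨k - 1, (Nat.succ_pred_eq_of_pos hk).symm⟩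
  -- linear independence of the difference vectors
  have hli : LinearIndependent ℝ (dv vbar) := by
    have h1 := (affineIndependent_iff_linearIndependent_vsub ℝ vbar 0).mp hindep
    have h2 := h1.comp
      (fun j : Fin m => (⟨j.succ, Fin.succ_ne_zero j⟩ : {i : Fin (m+1) // i ≠ (0 : Fin (m+1))}))
      (fun a b hab => Fin.succ_injective m (congrArg Subtype.val hab))
    exact h2
  set M : E := minNorm (convexHull ℝ (Set.range vbar)) with hMdef
  -- existence of a minimizer
  have hex : ∃ v, v ∈ convexHull ℝ (Set.range vbar) ∧
      ∀ w ∈ convexHull ℝ (Set.range vbar), ‖v‖ ≤ ‖w‖ := by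
    have hcpt : IsCompact (convexHull ℝ (Set.range vbar)) :=
      (Set.finite_range vbar).isCompact_convexHull ℝ
    have hne : (convexHull ℝ (Set.range vbar)).Nonempty :=
      ⟨vbar 0, subset_convexHull ℝ _ (mem_range_self 0)⟩
    obtain ⟨x, hxs, hxmin⟩ := hcpt.exists_isMinOn hne continuous_norm.continuousOn
    exact ⟨x, hxs, fun w hw => hxmin hw⟩
  obtain ⟨hMmem, hMmin⟩ := minNorm_spec_s14 hex
  have hdetpos : 0 < (Gm vbar).det := (gram_posDef hli).det_pos
  have hMspan : M ∈ affineSpan ℝ (Set.range vbar) :=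
    convexHull_subset_affineSpan _ hMmem
  -- M minimizes the norm over the whole affine span
  have hMmin_span : ∀ w ∈ affineSpan ℝ (Set.range vbar), ‖M‖ ≤ ‖w‖ := by
    intro w hw
    set u : E := w - M with hu_def
    have hu : u ∈ (affineSpan ℝ (convexHull ℝ (Set.range vbar))).direction := by
      rw [affineSpan_convexHull]
      have := AffineSubspace.vsub_mem_direction hw hMspan
      rwa [vsub_eq_sub] at this
    have hev := eventually_mem_of_intrinsicInterior hri hu
    have hineq : ∀ᶠ t in 𝓝 (0:ℝ), 0 ≤ 2*t*⟪M, u⟫ + t^2*‖u‖^2 := by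
      filter_upwards [hev] with t ht
      have h1 : ‖M‖ ≤ ‖M + t • u‖ := hMmin _ ht
      have h2 : ‖M + t • u‖^2 = ‖M‖^2 + 2*t*⟪M, u⟫ + t^2*‖u‖^2 := by
        rw [norm_add_sq_real, real_inner_smul_right, norm_smul]
        simp [mul_pow]
        ring
      nlinarith [norm_nonneg (M + t • u), norm_nonneg M]
    have hc1 : 0 ≤ 2*⟪M, u⟫ := by
      have hev1 : ∀ᶠ t in 𝓝[>] (0:ℝ), 0 ≤ 2*⟪M, u⟫ + t*‖u‖^2 := by
        filter_upwards [hineq.filter_mono nhdsWithin_le_nhds, self_mem_nhdsWithin] with t ht ht'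
        have htpos : (0:ℝ) < t := ht'
        nlinarith
      have hlim : Tendsto (fun t : ℝ => 2*⟪M, u⟫ + t*‖u‖^2) (𝓝[>] (0:ℝ))
          (𝓝 (2*⟪M, u⟫)) := by
        have hcont : Continuous fun t : ℝ => 2*⟪M, u⟫ + t*‖u‖^2 := by continuity
        have := hcont.tendsto 0
        simpa using this.mono_left nhdsWithin_le_nhds
      exact ge_of_tendsto hlim hev1
    have hc2 : 2*⟪M, u⟫ ≤ 0 := by
      have hev2 : ∀ᶠ t in 𝓝[<] (0:ℝ), 2*⟪M, u⟫ + t*‖u‖^2 ≤ 0 := by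
        filter_upwards [hineq.filter_mono nhdsWithin_le_nhds, self_mem_nhdsWithin] with t ht ht'
        have htneg : t < (0:ℝ) := ht'
        nlinarith
      have hlim : Tendsto (fun t : ℝ => 2*⟪M, u⟫ + t*‖u‖^2) (𝓝[<] (0:ℝ))
          (𝓝 (2*⟪M, u⟫)) := by
        have hcont : Continuous fun t : ℝ => 2*⟪M, u⟫ + t*‖u‖^2 := by continuity
        have := hcont.tendsto 0
        simpa using this.mono_left nhdsWithin_le_nhds
      exact le_of_tendsto hlim hev2
    have hc : ⟪M, u⟫ = 0 := by linarith
    have hw2 : ‖w‖^2 = ‖M‖^2 + ‖u‖^2 := by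
      have hwu : w = M + u := by rw [hu_def]; abel
      rw [hwu, norm_add_sq_real, hc]
      ring
    nlinarith [norm_nonneg w, norm_nonneg M, sq_nonneg ‖u‖]
  -- the smooth projection agrees with M at vbar
  have hpM : pv vbar = M :=
    min_unique (AffineSubspace.convex _) (pv_mem vbar) hMspan (pv_min (ne_of_gt hdetpos))
      hMmin_span
  -- barycentric coordinates of M
  obtain ⟨a, ha0, ha1, haM⟩ := (mem_convexHull_range_iff vbar M).mp hMmem
  -- strict positivity of the coordinates
  have hapos : ∀ j, 0 < a j := by
    intro j
    rcases (ha0 j).lt_or_eq with h | h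
    · exact h
    exfalso
    have haj : a j = 0 := h.symm
    set u : E := M - vbar j with hu_def
    have hu : u ∈ (affineSpan ℝ (convexHull ℝ (Set.range vbar))).direction := by
      rw [affineSpan_convexHull]
      have := AffineSubspace.vsub_mem_direction hMspan
        (mem_affineSpan ℝ (mem_range_self j))
      rwa [vsub_eq_sub] at this
    have hev := eventually_mem_of_intrinsicInterior hri hu
    obtain ⟨t, htmem, htpos⟩ :=
      ((hev.filter_mono (nhdsWithin_le_nhds : 𝓝[Set.Ioi (0:ℝ)] 0 ≤ 𝓝 0)).and
        eventually_mem_nhdsWithin).exists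
    have htpos' : (0:ℝ) < t := htpos
    obtain ⟨a', ha'0, ha'1, ha'M⟩ := (mem_convexHull_range_iff vbar _).mp htmem
    set b : Fin (m+1) → ℝ := fun i => (1+t) * a i - (if i = j then t else 0) with hb_def
    have hb1 : ∑ i, b i = 1 := by
      simp only [hb_def, Finset.sum_sub_distrib, ← Finset.mul_sum, ha1,
        Finset.sum_ite_eq' Finset.univ j (fun _ => t)]
      simp
    have hbM : ∑ i, b i • vbar i = M + t • u := by
      have h1 : ∑ i, b i • vbar i
          = ∑ i, ((1+t) • (a i • vbar i)) - ∑ i, (if i = j then t else 0) • vbar i := by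
        rw [← Finset.sum_sub_distrib]
        apply Finset.sum_congr rfl
        intro i _
        rw [hb_def, sub_smul, mul_smul]
      rw [h1, ← Finset.smul_sum, haM]
      have h2 : ∑ i, (if i = j then t else 0) • vbar i = t • vbar j := by
        simp [ite_smul]
      rw [h2, hu_def]
      rw [add_smul, one_smul, smul_sub]
      abel
    have hab := coords_unique hli ha'1 hb1 (ha'M.trans hbM.symm)
    have : a' j = -t := by
      rw [hab, hb_def]
      simp [haj]
    linarith [ha'0 j]
  -- coordinates of pv vbar agree with a
  have hw0 : (fun i => (Fin.cases (1 - ∑ j, cv vbar j) (fun j => cv vbar j) i : ℝ)) = a :=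
    coords_unique hli (pv_sum_one vbar) ha1 ((pv_combo vbar).trans (hpM.trans haM.symm))
  have hcvpos : ∀ j, 0 < cv vbar j := by
    intro j
    have := hapos j.succ
    rw [← hw0] at this
    simpa using this
  have h1pos : 0 < 1 - ∑ j, cv vbar j := by
    have := hapos 0
    rw [← hw0] at this
    simpa using this
  -- smoothness infrastructure
  have hproj : ∀ l : Fin (m+1), ContDiff ℝ (⊤ : WithTop ℕ∞) fun v : Fin (m+1) → E => v l :=
    fun l => (ContinuousLinearMap.proj l : ((Fin (m+1) → E)) →L[ℝ] E).contDiff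
  have hdsm : ∀ l : Fin m, ContDiff ℝ (⊤ : WithTop ℕ∞) fun v : Fin (m+1) → E => dv v l :=
    fun l => (hproj l.succ).sub (hproj 0)
  have hGsm : ∀ i j, ContDiff ℝ (⊤ : WithTop ℕ∞) fun v : Fin (m+1) → E => Gm v i j := by
    intro i j
    exact ContDiff.inner ℝ (hdsm i) (hdsm j)
  have hbsm : ∀ i, ContDiff ℝ (⊤ : WithTop ℕ∞) fun v : Fin (m+1) → E => bv v i :=
    fun i => (ContDiff.inner ℝ (hproj 0) (hdsm i)).neg
  have hdetsm : ContDiff ℝ (⊤ : WithTop ℕ∞) fun v : Fin (m+1) → E => (Gm v).det :=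
    contDiff_det hGsm
  have hcnumsm : ∀ i, ContDiff ℝ (⊤ : WithTop ℕ∞) fun v : Fin (m+1) → E => cnum v i := by
    intro i
    apply contDiff_det
    intro x y
    have : (fun v : Fin (m+1) → E => ((Gm v).updateCol i (bv v)) x y)
        = fun v : Fin (m+1) → E => if y = i then bv v x else Gm v x y := by
      funext v
      rw [Matrix.updateCol_apply]
    rw [this]
    split_ifs with h
    · exact hbsm x
    · exact hGsm x y
  -- the open set
  set U : Set (Fin (m+1) → E) :=
    ({v | 0 < (Gm v).det} ∩ {v | ∀ i, 0 < cnum v i}) ∩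
      {v | 0 < (Gm v).det - ∑ i, cnum v i} with hU_def
  have hUopen : IsOpen U := by
    apply IsOpen.inter
    · apply IsOpen.inter
      · exact isOpen_lt continuous_const hdetsm.continuous
      · rw [setOf_forall]
        exact isOpen_iInter_of_finite fun i =>
          isOpen_lt continuous_const (hcnumsm i).continuous
    · exact isOpen_lt continuous_const
        (hdetsm.continuous.sub (continuous_finset_sum _ fun i _ => (hcnumsm i).continuous))
  have hcnum_eq : ∀ (v : Fin (m+1) → E), (Gm v).det ≠ 0 → ∀ i,
      cnum v i = cv v i * (Gm v).det := by
    intro v hv i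
    rw [cv, div_mul_cancel₀ _ hv]
  have hvbarU : vbar ∈ U := by
    refine ⟨⟨hdetpos, fun i => ?_⟩, ?_⟩
    · rw [hcnum_eq vbar (ne_of_gt hdetpos) i]
      exact mul_pos (hcvpos i) hdetpos
    · have heq : (Gm vbar).det - ∑ i, cnum vbar i = (1 - ∑ i, cv vbar i) * (Gm vbar).det := by
        rw [sub_mul, one_mul, Finset.sum_mul]
        congr 1
        exact (Finset.sum_congr rfl fun i _ => hcnum_eq vbar (ne_of_gt hdetpos) i)
      show 0 < (Gm vbar).det - ∑ i, cnum vbar i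
      rw [heq]
      exact mul_pos h1pos hdetpos
  -- smoothness of pv on the set where det ≠ 0
  have hUsub : U ⊆ {v : Fin (m+1) → E | (Gm v).det ≠ 0} := fun v hv => ne_of_gt hv.1.1
  have hcvsm : ∀ i, ContDiffOn ℝ (⊤ : WithTop ℕ∞) (fun v : Fin (m+1) → E => cv v i)
      {v : Fin (m+1) → E | (Gm v).det ≠ 0} := by
    intro i
    exact (hcnumsm i).contDiffOn.div hdetsm.contDiffOn fun v hv => hv
  have hpvsm : ContDiffOn ℝ (⊤ : WithTop ℕ∞) (fun v : Fin (m+1) → E => pv v)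
      {v : Fin (m+1) → E | (Gm v).det ≠ 0} := by
    have : ContDiffOn ℝ (⊤ : WithTop ℕ∞)
        (fun v : Fin (m+1) → E => v 0 + ∑ i, cv v i • dv v i)
        {v : Fin (m+1) → E | (Gm v).det ≠ 0} := by
      apply ContDiffOn.add ((hproj 0).contDiffOn)
      apply ContDiffOn.sum
      intro i _
      exact (hcvsm i).smul (hdsm i).contDiffOn
    exact this.congr fun v _ => by rw [pv]
  refine ⟨U, hUopen, hvbarU, ?_⟩
  apply ContDiffOn.congr ((hpvsm.mono hUsub).of_le le_top)
  intro v hv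
  have hdetne : (Gm v).det ≠ 0 := ne_of_gt hv.1.1
  have hcv' : ∀ i, 0 < cv v i := fun i => div_pos (hv.1.2 i) hv.1.1
  have h1' : 0 < 1 - ∑ i, cv v i := by
    have hs : ∑ i, cv v i = (∑ i, cnum v i) / (Gm v).det := by
      rw [Finset.sum_div]
      exact Finset.sum_congr rfl fun i _ => rfl
    have hq : 0 < ((Gm v).det - ∑ i, cnum v i) / (Gm v).det := div_pos hv.2 hv.1.1
    rw [sub_div, div_self hdetne] at hq
    rwa [hs]
  have hpvhull : pv v ∈ convexHull ℝ (Set.range v) := by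
    refine (mem_convexHull_range_iff v (pv v)).mpr
      ⟨fun i => (Fin.cases (1 - ∑ j, cv v j) (fun j => cv v j) i : ℝ), ?_, pv_sum_one v,
        pv_combo v⟩
    intro i
    induction i using Fin.cases with
    | zero => simpa using le_of_lt h1'
    | succ j => simpa using le_of_lt (hcv' j)
  have hpvmin : ∀ w ∈ convexHull ℝ (Set.range v), ‖pv v‖ ≤ ‖w‖ :=
    fun w hw => pv_min hdetne w (convexHull_subset_affineSpan _ hw)
  exact minNorm_eq (convex_convexHull ℝ _) hpvhull hpvmin
end

section
/- Let β > 0 and κ > 0, and define φ : (0, e^κ) → ℝ by φ(t) = t / (β·(κ − log t)), where log is the natural logarithm. Then φ is a continuous, strictly increasing bijection from (0, e^κ) onto (0, +∞), and its inverse φ⁻¹ : (0, +∞) → (0, e^κ) satisfies lim_{s → +∞} (s / log s) · φ⁻¹(1/s) = β; consequently φ⁻¹(1/s) = O((log s)/s) as s → ∞. -/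
/-! With `z = κ - log t`, the map `φ t = t / (β z)` is continuous and strictly increasing on
`(0, e^κ)`, tends to `0` at `0⁺` and to `+∞` at `(e^κ)⁻`, hence is a bijection onto `(0, ∞)`.
If `u = φ⁻¹ (1/s)` and `z = κ - log u`, then `s u = β z` and `log s = z + log z + log β - κ`, so
`(s / log s) u = β z / (z + log z + log β - κ)`, which tends to `β` because `u → 0⁺`,
i.e. `z → ∞`. -/

open Filter Topology Metric Set
open scoped Classical

variable {E : Type*} [NormedAddCommGroup E] [InnerProductSpace ℝ E] [FiniteDimensional ℝ E]

theorem StrictMonoOn.tendsto_nhdsGT_of_rightInvOn {α β : Type*} [LinearOrder α]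
    [TopologicalSpace α] [OrderTopology α] [DenselyOrdered α] [NoMaxOrder α] [LinearOrder β]
    [TopologicalSpace β] [OrderTopology β] {f : α → β} {g : β → α} {a b : α} {c : β}
    (hab : a < b) (hf : StrictMonoOn f (Ioo a b)) (hfm : MapsTo f (Ioo a b) (Ioi c))
    (hgm : MapsTo g (Ioi c) (Ioo a b)) (hfg : RightInvOn g f (Ioi c)) :
    Tendsto g (𝓝[>] c) (𝓝[>] a) := by
  rw [(nhdsGT_basis a).tendsto_right_iff]
  intro ε hε
  obtain ⟨ε', haε', hε'⟩ := exists_between (lt_min hε hab)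
  have hε'mem : ε' ∈ Ioo a b := ⟨haε', hε'.trans_le (min_le_right _ _)⟩
  filter_upwards [Ioo_mem_nhdsGT (hfm hε'mem)] with x hx
  have hgx := hgm hx.1
  have hlt : f (g x) < f ε' := by rw [hfg hx.1]; exact hx.2
  exact ⟨hgx.1, ((hf.lt_iff_lt hgx hε'mem).1 hlt).trans (hε'.trans_le (min_le_left _ _))⟩

theorem Real.tendsto_div_add_log_add_const_atTop (c : ℝ) :
    Tendsto (fun z => z / (z + Real.log z + c)) atTop (𝓝 1) := by
  have hsmall : Tendsto (fun z => Real.log z / z + c / z) atTop (𝓝 0) := by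
    simpa using Real.isLittleO_log_id_atTop.tendsto_div_nhds_zero.add
      (tendsto_const_nhds.div_atTop tendsto_id)
  have hinv : Tendsto (fun z => (1 + (Real.log z / z + c / z))⁻¹) atTop (𝓝 1) := by
    simpa using (hsmall.const_add 1).inv₀ (by norm_num)
  refine hinv.congr' ?_
  filter_upwards [eventually_gt_atTop 0] with z hz
  field_simp
  ring

namespace LogRate

variable {β κ : ℝ}

noncomputable def phi (β κ t : ℝ) : ℝ := t / (β * (κ - Real.log t))

lemma denom_pos (hβ : 0 < β) {t : ℝ} (ht : t ∈ Ioo 0 (Real.exp κ)) :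
    0 < β * (κ - Real.log t) :=
  mul_pos hβ (sub_pos.2 ((Real.log_lt_iff_lt_exp ht.1).2 ht.2))

lemma continuousOn_phi (hβ : 0 < β) : ContinuousOn (phi β κ) (Ioo 0 (Real.exp κ)) :=
  continuousOn_id.div
    (continuousOn_const.mul (continuousOn_const.sub (Real.continuousOn_log.mono
      fun _ ht => ht.1.ne')))
    fun _ ht => (denom_pos hβ ht).ne'

lemma strictMonoOn_phi (hβ : 0 < β) : StrictMonoOn (phi β κ) (Ioo 0 (Real.exp κ)) := by
  intro a ha b hb hab
  have hlog : Real.log a < Real.log b := Real.log_lt_log ha.1 hab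
  calc a / (β * (κ - Real.log a)) < b / (β * (κ - Real.log a)) := by
        gcongr; exact denom_pos hβ ha
    _ ≤ b / (β * (κ - Real.log b)) := by
        gcongr
        · exact hb.1.le
        · exact denom_pos hβ hb

lemma mapsTo_phi (hβ : 0 < β) : MapsTo (phi β κ) (Ioo 0 (Real.exp κ)) (Ioi 0) :=
  fun _ ht => div_pos ht.1 (denom_pos hβ ht)

lemma tendsto_sub_log_nhdsGT_zero (κ : ℝ) :
    Tendsto (fun t => κ - Real.log t) (𝓝[>] 0) atTop :=
  tendsto_atTop_add_const_left _ κ (tendsto_neg_atBot_atTop.comp Real.tendsto_log_nhdsGT_zero)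

lemma tendsto_phi_nhdsGT_zero (hβ : 0 < β) : Tendsto (phi β κ) (𝓝[>] 0) (𝓝 0) :=
  (tendsto_nhdsWithin_of_tendsto_nhds tendsto_id).div_atTop
    ((tendsto_sub_log_nhdsGT_zero κ).const_mul_atTop hβ)

lemma tendsto_phi_nhdsLT_exp (hβ : 0 < β) : Tendsto (phi β κ) (𝓝[<] Real.exp κ) atTop := by
  have hden : Tendsto (fun t => β * (κ - Real.log t)) (𝓝[<] Real.exp κ) (𝓝[>] 0) := by
    refine tendsto_nhdsWithin_iff.2 ⟨?_, ?_⟩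
    · have hcont : ContinuousAt (fun t => β * (κ - Real.log t)) (Real.exp κ) :=
        continuousAt_const.mul (continuousAt_const.sub
          (Real.continuousAt_log (Real.exp_pos κ).ne'))
      simpa using hcont.tendsto.mono_left nhdsWithin_le_nhds
    · filter_upwards [Ioo_mem_nhdsLT (Real.exp_pos κ)] with t ht using denom_pos hβ ht
  exact (tendsto_nhdsWithin_of_tendsto_nhds tendsto_id).pos_mul_atTop (Real.exp_pos κ)
    hden.inv_tendsto_nhdsGT_zero

lemma bijOn_phi (hβ : 0 < β) : BijOn (phi β κ) (Ioo 0 (Real.exp κ)) (Ioi 0) := by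
  refine ⟨mapsTo_phi hβ, (strictMonoOn_phi hβ).injOn, fun s hs => ?_⟩
  exact isPreconnected_Ioo.intermediate_value_Ioi
    (le_principal_iff.2 (Ioo_mem_nhdsGT (Real.exp_pos κ)))
    (le_principal_iff.2 (Ioo_mem_nhdsLT (Real.exp_pos κ)))
    (continuousOn_phi hβ) (tendsto_phi_nhdsGT_zero hβ) (tendsto_phi_nhdsLT_exp hβ) hs

lemma tendsto_inv_phi_div_log_mul (hβ : 0 < β) :
    Tendsto (fun t => (phi β κ t)⁻¹ / Real.log (phi β κ t)⁻¹ * t) (𝓝[>] 0) (𝓝 β) := by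
  have hlim := ((Real.tendsto_div_add_log_add_const_atTop (Real.log β - κ)).comp
    (tendsto_sub_log_nhdsGT_zero κ)).const_mul β
  rw [mul_one] at hlim
  refine hlim.congr' ?_
  filter_upwards [Ioo_mem_nhdsGT (Real.exp_pos κ)] with t ht
  have hD := denom_pos hβ ht
  have hlog : Real.log (phi β κ t)⁻¹ =
      (κ - Real.log t) + Real.log (κ - Real.log t) + (Real.log β - κ) := by
    rw [phi, inv_div, Real.log_div hD.ne' ht.1.ne',
      Real.log_mul hβ.ne' (pos_of_mul_pos_right hD hβ.le).ne']
    ring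
  rw [Function.comp_apply, hlog, phi, inv_div]
  field_simp
  rw [mul_div_mul_right _ _ ht.1.ne']

lemma tendsto_div_log_mul_of_rightInvOn (hβ : 0 < β) {ψ : ℝ → ℝ}
    (hψ : MapsTo ψ (Ioi 0) (Ioo 0 (Real.exp κ))) (hright : RightInvOn ψ (phi β κ) (Ioi 0)) :
    Tendsto (fun s => s / Real.log s * ψ (1 / s)) atTop (𝓝 β) := by
  have hψ0 : Tendsto (fun s => ψ (1 / s)) atTop (𝓝[>] 0) := by
    have hψ_inv := ((strictMonoOn_phi hβ).tendsto_nhdsGT_of_rightInvOn (Real.exp_pos κ)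
      (mapsTo_phi hβ) hψ hright).comp tendsto_inv_atTop_nhdsGT_zero
    simpa only [one_div, Function.comp_def] using hψ_inv
  refine ((tendsto_inv_phi_div_log_mul (κ := κ) hβ).comp hψ0).congr' ?_
  filter_upwards [eventually_gt_atTop 0] with s hs
  rw [Function.comp_apply, hright (one_div_pos.2 hs), one_div, inv_inv]

end LogRate

open Asymptotics in
theorem Real.isBigO_log_div_of_tendsto_div_log_mul {f : ℝ → ℝ} {c : ℝ}
    (h : Tendsto (fun s => s / Real.log s * f s) atTop (𝓝 c)) :
    f =O[atTop] fun s => Real.log s / s := by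
  refine isBigO_of_div_tendsto_nhds ?_ c (h.congr' ?_)
  · filter_upwards [eventually_gt_atTop 1] with s hs hzero
    exact absurd hzero (div_pos (Real.log_pos hs) (by linarith)).ne'
  · filter_upwards with s
    rw [Pi.div_apply, div_div_eq_mul_div, mul_comm, mul_div_assoc]

open Asymptotics in
theorem stmt19_general (β κ : ℝ) (hβ : 0 < β) :
    ContinuousOn (fun t : ℝ => t / (β * (κ - Real.log t))) (Set.Ioo 0 (Real.exp κ)) ∧
    StrictMonoOn (fun t : ℝ => t / (β * (κ - Real.log t))) (Set.Ioo 0 (Real.exp κ)) ∧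
    Set.BijOn (fun t : ℝ => t / (β * (κ - Real.log t))) (Set.Ioo 0 (Real.exp κ))
      (Set.Ioi 0) ∧
    ∃ ψ : ℝ → ℝ,
      Set.BijOn ψ (Set.Ioi 0) (Set.Ioo 0 (Real.exp κ)) ∧
      (∀ t ∈ Set.Ioo 0 (Real.exp κ), ψ (t / (β * (κ - Real.log t))) = t) ∧
      (∀ s ∈ Set.Ioi (0 : ℝ), ψ s / (β * (κ - Real.log (ψ s))) = s) ∧
      Tendsto (fun s : ℝ => s / Real.log s * ψ (1 / s)) atTop (𝓝 β) ∧
      (fun s : ℝ => ψ (1 / s)) =O[atTop] fun s : ℝ => Real.log s / s := by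
  have hφ := LogRate.bijOn_phi (κ := κ) hβ
  have hinv : InvOn (Function.invFunOn (LogRate.phi β κ) (Ioo 0 (Real.exp κ)))
      (LogRate.phi β κ) (Ioo 0 (Real.exp κ)) (Ioi 0) := hφ.invOn_invFunOn
  have hψ := hφ.symm hinv.symm
  have hlim := LogRate.tendsto_div_log_mul_of_rightInvOn hβ hψ.mapsTo hinv.2
  exact ⟨LogRate.continuousOn_phi hβ, LogRate.strictMonoOn_phi hβ, hφ, _, hψ, hinv.1, hinv.2,
    hlim, Real.isBigO_log_div_of_tendsto_div_log_mul hlim⟩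

open Asymptotics in
theorem stmt19 (β κ : ℝ) (hβ : 0 < β) (hκ : 0 < κ) :
    ContinuousOn (fun t : ℝ => t / (β * (κ - Real.log t))) (Set.Ioo 0 (Real.exp κ)) ∧
    StrictMonoOn (fun t : ℝ => t / (β * (κ - Real.log t))) (Set.Ioo 0 (Real.exp κ)) ∧
    Set.BijOn (fun t : ℝ => t / (β * (κ - Real.log t))) (Set.Ioo 0 (Real.exp κ))
      (Set.Ioi 0) ∧
    ∃ ψ : ℝ → ℝ,
      Set.BijOn ψ (Set.Ioi 0) (Set.Ioo 0 (Real.exp κ)) ∧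
      (∀ t ∈ Set.Ioo 0 (Real.exp κ), ψ (t / (β * (κ - Real.log t))) = t) ∧
      (∀ s ∈ Set.Ioi (0 : ℝ), ψ s / (β * (κ - Real.log (ψ s))) = s) ∧
      Tendsto (fun s : ℝ => s / Real.log s * ψ (1 / s)) atTop (𝓝 β) ∧
      (fun s : ℝ => ψ (1 / s)) =O[atTop] fun s : ℝ => Real.log s / s :=
  stmt19_general β κ hβ
end
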